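/- arXiv:1110.0904 — 6 statements merged into one kernel-verified Lean document; each statement's English description precedes it below -/
import Mathlib

section
/- For all n ≥ 2, the number of sequences in S(n,1) equals the binomial coefficient C(n,2). -/
open Finset

/-- A partial matching of `[m]`: a set of arcs `(i,j)` with `1 ≤ i < j ≤ m`
such that every vertex belongs to at most one arc. -/
def IsMatching (m : ℕ) (M : Finset (ℕ × ℕ)) : Prop :=
  (∀ p ∈ M, 1 ≤ p.1 ∧ p.1 < p.2 ∧ p.2 ≤ m) ∧
  ∀ p ∈ M, ∀ q ∈ M, p ≠ q → p.1 ≠ q.1 ∧ p.1 ≠ q.2 ∧ p.2 ≠ q.1 ∧ p.2 ≠ q.2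

/-- The linear (arc) diagram of a partition of `[n]`: every vertex is the left
endpoint of at most one arc and the right endpoint of at most one arc. -/
def IsPartitionDiagram (n : ℕ) (P : Finset (ℕ × ℕ)) : Prop :=
  (∀ p ∈ P, 1 ≤ p.1 ∧ p.1 < p.2 ∧ p.2 ≤ n) ∧
  ∀ p ∈ P, ∀ q ∈ P, p ≠ q → p.1 ≠ q.1 ∧ p.2 ≠ q.2

/-- A 2-right crossing: arcs `(i1,j1)`, `(i2,j2)` with `i1<i2<j1<j2` and `j2-j1 ≤ 2`. -/
def Has2RightCrossing (M : Finset (ℕ × ℕ)) : Prop :=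
  ∃ p ∈ M, ∃ q ∈ M, p.1 < q.1 ∧ q.1 < p.2 ∧ p.2 < q.2 ∧ q.2 ≤ p.2 + 2

/-- A right crossing: arcs `(i1,j1)`, `(i2,j2)` with `i1<i2<j1<j2` and `j2 = j1+1`. -/
def HasRightCrossing (M : Finset (ℕ × ℕ)) : Prop :=
  ∃ p ∈ M, ∃ q ∈ M, p.1 < q.1 ∧ q.1 < p.2 ∧ p.2 < q.2 ∧ q.2 = p.2 + 1

/-- A right nesting: arcs `(i1,j1)`, `(i2,j2)` with `i1<i2<j2<j1` and `j1 = j2+1`. -/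
def HasRightNesting (M : Finset (ℕ × ℕ)) : Prop :=
  ∃ p ∈ M, ∃ q ∈ M, p.1 < q.1 ∧ q.1 < q.2 ∧ q.2 < p.2 ∧ p.2 = q.2 + 1

/-- `P(m,k)`: partial matchings of `[m]` with `k` arcs avoiding 2-right crossings
and right nestings. -/
def PMSet (m k : ℕ) : Set (Finset (ℕ × ℕ)) :=
  {M | IsMatching m M ∧ M.card = k ∧ ¬ Has2RightCrossing M ∧ ¬ HasRightNesting M}

/-- `CT(n,k)`: partitions of `[n]` with `k` arcs avoiding right crossings. -/
def CTSet (n k : ℕ) : Set (Finset (ℕ × ℕ)) :=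
  {P | IsPartitionDiagram n P ∧ P.card = k ∧ ¬ HasRightCrossing P}

/-- `lmax x i = max(x_0, …, x_{i-1})` (with value `0` when `i = 0`). -/
def lmax (x : ℕ → ℕ) (i : ℕ) : ℕ := (Finset.range i).sup x

/-- `x_i` is a left-to-right maximum (with `x_0` always counted as one). -/
def IsLTRMax (x : ℕ → ℕ) (i : ℕ) : Prop := i = 0 ∨ lmax x i < x i

/-- `S(n,k)`: sequences `x_0 … x_{n-1}` (extended by `0`) with `x_0 = 0`,
`0 ≤ x_i ≤ max(x_0…x_{i-1})+1`, `x_i < x_{i-1}` whenever `x_i < max(x_0…x_{i-1})`,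
and exactly `n-k` left-to-right maxima. -/
def SeqSet (n k : ℕ) : Set (ℕ → ℕ) :=
  {x | (∀ i, n ≤ i → x i = 0) ∧ x 0 = 0 ∧
       (∀ i, 1 ≤ i → i < n → x i ≤ lmax x i + 1) ∧
       (∀ i, 1 ≤ i → i < n → x i < lmax x i → x i < x (i - 1)) ∧
       ((Finset.range n).filter (fun i => i = 0 ∨ lmax x i < x i)).card = n - k}
def Fseq (n j v : ℕ) : ℕ → ℕ := fun i =>
  if n ≤ i then 0 else if i < j then i else if i = j then v else i - 1

lemma range_sup_eq {x : ℕ → ℕ} {i M : ℕ} (h1 : ∀ t, t < i → x t ≤ M)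
    (h2 : ∃ t, t < i ∧ M ≤ x t) : (Finset.range i).sup x = M := by
  refine le_antisymm (Finset.sup_le fun t ht => h1 t (Finset.mem_range.mp ht)) ?_
  obtain ⟨t, ht, hM⟩ := h2
  exact hM.trans (Finset.le_sup (Finset.mem_range.mpr ht))

lemma lmax_Fseq {n j v : ℕ} (hj1 : 1 ≤ j) (hjn : j < n) (hv : v < j)
    {i : ℕ} (hi1 : 1 ≤ i) (hin : i ≤ n) :
    lmax (Fseq n j v) i = if i ≤ j then i - 1 else i - 2 := by
  unfold lmax
  split
  · rename_i hij
    apply range_sup_eq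
    · intro t ht
      simp only [Fseq]; split_ifs <;> omega
    · refine ⟨i - 1, by omega, ?_⟩
      simp only [Fseq]; split_ifs <;> omega
  · rename_i hij
    apply range_sup_eq
    · intro t ht
      simp only [Fseq]; split_ifs <;> omega
    · by_cases hc : i = j + 1
      · refine ⟨j - 1, by omega, ?_⟩
        simp only [Fseq]; split_ifs <;> omega
      · refine ⟨i - 1, by omega, ?_⟩
        simp only [Fseq]; split_ifs <;> omega

lemma Fseq_mem {n j v : ℕ} (hn : 2 ≤ n) (hjn : j < n) (hv : v < j) :
    Fseq n j v ∈ SeqSet n 1 := by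
  have hj1 : 1 ≤ j := by omega
  refine ⟨fun i hi => by simp [Fseq, hi], by simp only [Fseq]; split_ifs <;> omega, ?_, ?_, ?_⟩
  · intro i hi1 hin
    rw [lmax_Fseq hj1 hjn hv hi1 (le_of_lt hin)]
    simp only [Fseq]; split_ifs <;> omega
  · intro i hi1 hin hlt
    rw [lmax_Fseq hj1 hjn hv hi1 (le_of_lt hin)] at hlt
    simp only [Fseq] at hlt ⊢
    split_ifs at hlt ⊢ <;> omega
  · have : (Finset.range n).filter
        (fun i => i = 0 ∨ lmax (Fseq n j v) i < Fseq n j v i) = (Finset.range n).erase j := by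
      ext i
      simp only [Finset.mem_filter, Finset.mem_erase, Finset.mem_range]
      constructor
      · rintro ⟨hin, hP⟩
        refine ⟨?_, hin⟩
        rintro rfl
        rcases hP with h | h
        · omega
        · rw [lmax_Fseq hj1 hjn hv hj1 (le_of_lt hin)] at h
          simp only [Fseq] at h
          split_ifs at h <;> omega
      · rintro ⟨hij, hin⟩
        refine ⟨hin, ?_⟩
        rcases Nat.eq_zero_or_pos i with rfl | hi1
        · exact Or.inl rfl
        · right
          rw [lmax_Fseq hj1 hjn hv hi1 (le_of_lt hin)]
          simp only [Fseq]
          split_ifs <;> omega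
    rw [this, Finset.card_erase_of_mem (Finset.mem_range.mpr hjn), Finset.card_range]

lemma mem_char {n : ℕ} (hn : 2 ≤ n) {x : ℕ → ℕ} (hx : x ∈ SeqSet n 1) :
    ∃ j v, j < n ∧ v < j ∧ x = Fseq n j v := by
  obtain ⟨h0, hx0, hub, hdec, hcard⟩ := hx
  have hsplit := Finset.card_filter_add_card_filter_not
    (s := Finset.range n) (p := fun i => i = 0 ∨ lmax x i < x i)
  rw [hcard, Finset.card_range] at hsplit
  have h1 : ((Finset.range n).filter (fun i => ¬ (i = 0 ∨ lmax x i < x i))).card = 1 := by omega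
  obtain ⟨j, hj⟩ := Finset.card_eq_one.mp h1
  have hjmem : j ∈ (Finset.range n).filter (fun i => ¬ (i = 0 ∨ lmax x i < x i)) := by
    rw [hj]; exact Finset.mem_singleton_self j
  rw [Finset.mem_filter, Finset.mem_range] at hjmem
  obtain ⟨hjn, hjP⟩ := hjmem
  push_neg at hjP
  obtain ⟨hj0, hjle⟩ := hjP
  have hj1 : 1 ≤ j := Nat.one_le_iff_ne_zero.mpr hj0
  have hP : ∀ i, i < n → i ≠ j → 1 ≤ i → lmax x i < x i := by
    intro i hin hij hi1
    by_contra hc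
    have : i ∈ (Finset.range n).filter (fun i => ¬ (i = 0 ∨ lmax x i < x i)) := by
      rw [Finset.mem_filter, Finset.mem_range]
      push_neg
      exact ⟨hin, by omega, by omega⟩
    rw [hj, Finset.mem_singleton] at this
    exact hij this
  have hA : ∀ i, i < j → x i = i := by
    intro i
    induction i using Nat.strong_induction_on with
    | _ i ih =>
      intro hij
      rcases Nat.eq_zero_or_pos i with rfl | hi1
      · exact hx0
      · have hlm : lmax x i = i - 1 := by
          apply range_sup_eq
          · intro t ht; rw [ih t ht (by omega)]; omega
          · exact ⟨i - 1, by omega, by rw [ih (i-1) (by omega) (by omega)]⟩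
        have h2 := hP i (by omega) (by omega) hi1
        have h3 := hub i hi1 (by omega)
        omega
  have hlmj : lmax x j = j - 1 := by
    apply range_sup_eq
    · intro t ht; rw [hA t ht]; omega
    · exact ⟨j - 1, by omega, by rw [hA (j-1) (by omega)]⟩
  have hvj : x j < j := by omega
  have hB : ∀ i, j < i → i < n → lmax x i = i - 2 ∧ x i = i - 1 := by
    intro i
    induction i using Nat.strong_induction_on with
    | _ i ih =>
      intro hji hin
      have hlm : lmax x i = i - 2 := by
        apply range_sup_eq
        · intro t ht
          rcases lt_trichotomy t j with h | rfl | h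
          · rw [hA t h]; omega
          · omega
          · rw [(ih t ht h (by omega)).2]; omega
        · by_cases hc : i = j + 1
          · exact ⟨j - 1, by omega, by rw [hA (j-1) (by omega)]; omega⟩
          · refine ⟨i - 1, by omega, ?_⟩
            rw [(ih (i-1) (by omega) (by omega) (by omega)).2]
            omega
      have h2 := hP i (by omega) (by omega) (by omega)
      have h3 := hub i (by omega) hin
      exact ⟨hlm, by omega⟩
  refine ⟨j, x j, hjn, hvj, ?_⟩
  funext i
  simp only [Fseq]
  split
  · exact h0 i (by omega)
  · split
    · exact hA i (by assumption)
    · split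
      · rename_i h; rw [h]
      · exact (hB i (by omega) (by omega)).2

lemma Fseq_inj {n j v j' v' : ℕ} (hjn : j < n) (hv : v < j) (hjn' : j' < n) (hv' : v' < j')
    (h : Fseq n j v = Fseq n j' v') : j = j' ∧ v = v' := by
  have h1 := congrFun h j
  have h2 := congrFun h j'
  simp only [Fseq] at h1 h2
  split_ifs at h1 h2 <;> omega

theorem stmt4_aux (n : ℕ) (hn : 2 ≤ n) : (SeqSet n 1).ncard = n.choose 2 := by
  classical
  set T : Finset (ℕ × ℕ) :=
    (Finset.range n).biUnion (fun j => (Finset.range j).image fun v => (j, v)) with hT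
  have hmemT : ∀ p : ℕ × ℕ, p ∈ T ↔ p.1 < n ∧ p.2 < p.1 := by
    intro p
    simp only [hT, Finset.mem_biUnion, Finset.mem_image, Finset.mem_range]
    constructor
    · rintro ⟨j, hj, v, hv, rfl⟩; exact ⟨hj, hv⟩
    · rintro ⟨h1, h2⟩; exact ⟨p.1, h1, p.2, h2, rfl⟩
  have hset : SeqSet n 1 = (fun p : ℕ × ℕ => Fseq n p.1 p.2) '' ↑T := by
    ext x
    constructor
    · intro hx
      obtain ⟨j, v, hjn, hv, rfl⟩ := mem_char hn hx
      exact ⟨(j, v), by simpa using (hmemT (j, v)).2 ⟨hjn, hv⟩, rfl⟩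
    · rintro ⟨p, hp, rfl⟩
      have hp' := (hmemT p).1 (by simpa using hp)
      exact Fseq_mem hn hp'.1 hp'.2
  have hinj : Set.InjOn (fun p : ℕ × ℕ => Fseq n p.1 p.2) ↑T := by
    intro p hp q hq h
    have hp' := (hmemT p).1 (by simpa using hp)
    have hq' := (hmemT q).1 (by simpa using hq)
    have := Fseq_inj hp'.1 hp'.2 hq'.1 hq'.2 h
    exact Prod.ext this.1 this.2
  rw [hset, Set.ncard_image_of_injOn hinj, Set.ncard_coe_finset]
  have hdisj : ∀ a ∈ Finset.range n, ∀ b ∈ Finset.range n, a ≠ b →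
      Disjoint ((Finset.range a).image fun v => (a, v)) ((Finset.range b).image fun v => (b, v)) := by
    intro a _ b _ hab
    rw [Finset.disjoint_left]
    intro p hp hq
    simp only [Finset.mem_image, Finset.mem_range] at hp hq
    obtain ⟨v, _, rfl⟩ := hp
    obtain ⟨w, _, h⟩ := hq
    exact hab ((Prod.mk.injEq _ _ _ _).mp h).1.symm
  rw [hT, Finset.card_biUnion hdisj]
  have hc : ∀ j ∈ Finset.range n, ((Finset.range j).image fun v => (j, v)).card = j := by
    intro j _
    rw [Finset.card_image_of_injective _ (fun a b hab => ((Prod.mk.injEq _ _ _ _).mp hab).2),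
      Finset.card_range]
  rw [Finset.sum_congr rfl hc]
  have := Finset.sum_range_id_mul_two n
  rw [Nat.choose_two_right]
  omega

/-- For all `n ≥ 2`, the number of sequences in `S(n,1)` is `C(n,2)`. -/
theorem stmt4 (n : ℕ) (hn : 2 ≤ n) : (SeqSet n 1).ncard = n.choose 2 := stmt4_aux n hn
end

section
/- For all n ≥ 1 and 0 ≤ k ≤ n-1, there is a bijection between the set P(n+k-1,k) of partial matchings of [n+k-1] with k arcs avoiding 2-right crossings and right nestings, and the set CT(n,k) of partitions of [n] with k arcs avoiding right crossings; in particular |P(n+k-1,k)| = |CT(n,k)|. -/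
/-!
In a matching avoiding 2-right crossings and right nestings no two right endpoints are adjacent.
Glue every right endpoint `j` other than the last one to the vertex `j + 1` that follows it. This
identifies `k - 1` pairs of vertices and turns a matching of `[n + k - 1]` with `k` arcs into the
diagram of a partition of `[n]` with `k` arcs, in which a right crossing could only come from a
2-right crossing. Conversely, splitting every right endpoint of a partition other than the last one
into a right endpoint followed by a left endpoint gives back the matching: the split separates
consecutive right endpoints, so no right nesting arises, and a 2-right crossing of the matching
would come from a right crossing of the partition.
-/

open Finset

namespace ArcDiagram

def below (S : Finset ℕ) (p : ℕ) : ℕ := #(S.filter (· < p))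

/-- Relabelling of the vertices that glues every `s ∈ S` to `s + 1`. -/
def collapse (S : Finset ℕ) (p : ℕ) : ℕ := p - below S p

/-- Relabelling of the vertices that splits every `s ∈ S` into `spread S s` (keeping the arc
ending at `s`) and `spreadLeft S s = spread S s + 1` (keeping the arc starting at `s`). -/
def spread (S : Finset ℕ) (p : ℕ) : ℕ := p + below S p

def spreadLeft (S : Finset ℕ) (p : ℕ) : ℕ := spread S p + if p ∈ S then 1 else 0

def NoTwoConsecutive (S : Finset ℕ) : Prop := ∀ s ∈ S, s + 1 ∉ S

lemma NoTwoConsecutive.mono {S T : Finset ℕ} (hT : NoTwoConsecutive T) (hST : S ⊆ T) :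
    NoTwoConsecutive S :=
  fun s hs hs1 => hT s (hST hs) (hST hs1)

section Relabel

variable {S : Finset ℕ} {a b p : ℕ}

lemma below_succ (S : Finset ℕ) (p : ℕ) :
    below S (p + 1) = below S p + if p ∈ S then 1 else 0 := by
  have hsplit : S.filter (· < p + 1) = S.filter (· < p) ∪ S.filter (· = p) := by
    rw [← filter_or]; exact filter_congr fun _ _ => by omega
  rw [below, below, hsplit, card_union_of_disjoint (disjoint_filter.2 fun _ _ h h' => by omega),
    filter_eq']
  split_ifs <;> simp

lemma below_le_self (S : Finset ℕ) (p : ℕ) : below S p ≤ p := by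
  refine (card_le_card fun j hj => ?_).trans_eq (card_range p)
  simpa using (mem_filter.1 hj).2

lemma below_eq_card (h : ∀ s ∈ S, s < p) : below S p = #S := by
  rw [below, filter_true_of_mem h]

lemma below_le_card (S : Finset ℕ) (p : ℕ) : below S p ≤ #S :=
  card_le_card (filter_subset _ _)

lemma collapse_succ (S : Finset ℕ) (p : ℕ) :
    collapse S (p + 1) = collapse S p + if p ∈ S then 0 else 1 := by
  have := below_succ S p
  have := below_le_self S p
  unfold collapse
  split_ifs at * <;> omega

lemma collapse_mono : Monotone (collapse S) :=
  monotone_nat_of_le_succ fun p => by rw [collapse_succ]; omega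

lemma collapse_lt_succ (hp : p ∉ S) : collapse S p < collapse S (p + 1) := by
  rw [collapse_succ, if_neg hp]; omega

lemma lt_of_collapse_lt (h : collapse S a < collapse S b) : a < b :=
  collapse_mono.reflect_lt h

lemma one_le_collapse (h0 : 0 ∉ S) (hp : 1 ≤ p) : 1 ≤ collapse S p :=
  Nat.one_le_of_lt ((collapse_lt_succ h0).trans_le (collapse_mono hp))

lemma collapse_lt_collapse (hS : NoTwoConsecutive S) (hab : a < b) (h : a ∈ S → b ≠ a + 1) :
    collapse S a < collapse S b := by
  obtain ⟨c, hac, hcb, hc⟩ : ∃ c, a ≤ c ∧ c + 1 ≤ b ∧ c ∉ S := by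
    by_cases ha : a ∈ S
    · exact ⟨a + 1, by omega, by have := h ha; omega, hS a ha⟩
    · exact ⟨a, le_rfl, hab, ha⟩
  calc collapse S a ≤ collapse S c := collapse_mono hac
    _ < collapse S (c + 1) := collapse_lt_succ hc
    _ ≤ collapse S b := collapse_mono hcb

lemma collapse_add_two (hS : NoTwoConsecutive S) (ha : a ∈ S) :
    collapse S (a + 2) = collapse S a + 1 := by
  rw [collapse_succ, if_neg (hS a ha), collapse_succ, if_pos ha]

lemma strictMonoOn_collapse {T : Finset ℕ} (hT : NoTwoConsecutive T) (hST : S ⊆ T) :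
    StrictMonoOn (collapse S) T :=
  fun a ha _ hb hab =>
    collapse_lt_collapse (hT.mono hST) hab fun _ hba => hT a ha (hba ▸ hb)

lemma strictMonoOn_collapse_compl (hS : NoTwoConsecutive S) :
    StrictMonoOn (collapse S) {a | a ∉ S} :=
  fun _ ha _ _ hab => collapse_lt_collapse hS hab fun h => absurd h ha

lemma spread_succ (S : Finset ℕ) (p : ℕ) :
    spread S (p + 1) = spread S p + 1 + if p ∈ S then 1 else 0 := by
  rw [spread, spread, below_succ]; ring

lemma spread_strictMono : StrictMono (spread S) :=
  strictMono_nat_of_lt_succ fun p => by rw [spread_succ]; omega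

lemma spread_le_spreadLeft : spread S p ≤ spreadLeft S p := Nat.le_add_right _ _

lemma spreadLeft_lt_spread (hab : a < b) : spreadLeft S a < spread S b :=
  calc spreadLeft S a < spread S (a + 1) := by rw [spreadLeft, spread_succ]; omega
    _ ≤ spread S b := spread_strictMono.monotone hab

lemma lt_of_spreadLeft_lt_spread (h : spreadLeft S a < spread S b) : a < b := by
  by_contra! hba
  exact h.not_ge ((spread_strictMono.monotone hba).trans spread_le_spreadLeft)

lemma spreadLeft_strictMono : StrictMono (spreadLeft S) :=
  fun _ _ hab => (spreadLeft_lt_spread hab).trans_le spread_le_spreadLeft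

lemma spreadLeft_ne_spread (h : a = b → a ∈ S) : spreadLeft S a ≠ spread S b := by
  rcases lt_trichotomy a b with hab | rfl | hba
  · exact (spreadLeft_lt_spread hab).ne
  · rw [spreadLeft, if_pos (h rfl)]; omega
  · exact ((spread_le_spreadLeft.trans_lt (spreadLeft_lt_spread hba)).trans_le
      spread_le_spreadLeft).ne'

lemma below_image {F : ℕ → ℕ} (hF : Set.InjOn F S) (hlt : ∀ s ∈ S, F s < F p ↔ s < p) :
    below (S.image F) (F p) = below S p := by
  rw [below, filter_image, card_image_of_injOn (hF.mono (coe_subset.2 (filter_subset _ _)))]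
  exact congrArg card (filter_congr hlt)

lemma below_image_spread (S : Finset ℕ) (p : ℕ) :
    below (S.image (spread S)) (spread S p) = below S p :=
  below_image spread_strictMono.injective.injOn fun _ _ => spread_strictMono.lt_iff_lt

lemma collapse_spread (S : Finset ℕ) (p : ℕ) :
    collapse (S.image (spread S)) (spread S p) = p := by
  rw [collapse, below_image_spread, spread]; omega

lemma collapse_spreadLeft (S : Finset ℕ) (p : ℕ) :
    collapse (S.image (spread S)) (spreadLeft S p) = p := by
  by_cases hp : p ∈ S
  · have hbelow : below (S.image (spread S)) (spread S p + 1) = below S p + 1 := by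
      rw [below_succ, if_pos (mem_image_of_mem _ hp), below_image_spread]
    rw [spreadLeft, if_pos hp, collapse, hbelow, spread]; omega
  · rw [spreadLeft, if_neg hp, add_zero, collapse_spread]

lemma spread_collapse (hS : NoTwoConsecutive S) (hp : ∀ s ∈ S, s + 1 ≠ p) :
    spread (S.image (collapse S)) (collapse S p) = p := by
  have hlt : ∀ s ∈ S, collapse S s < collapse S p ↔ s < p := fun s hs =>
    ⟨lt_of_collapse_lt, fun h => collapse_lt_collapse hS h fun _ => (hp s hs).symm⟩
  rw [spread, below_image (strictMonoOn_collapse hS subset_rfl).injOn hlt, collapse]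
  have := below_le_self S p
  omega

lemma spreadLeft_collapse (hS : NoTwoConsecutive S) (hp : p ∉ S) :
    spreadLeft (S.image (collapse S)) (collapse S p) = p := by
  by_cases h : ∃ s ∈ S, s + 1 = p
  · obtain ⟨s, hs, rfl⟩ := h
    have hcs : collapse S (s + 1) = collapse S s := by rw [collapse_succ, if_pos hs, add_zero]
    rw [spreadLeft, hcs, if_pos (mem_image_of_mem _ hs),
      spread_collapse hS fun s' hs' hs's => hS s' hs' (hs's ▸ hs)]
  · push Not at h
    have hnot : collapse S p ∉ S.image (collapse S) := by
      simp only [mem_image, not_exists, not_and]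
      intro s hs heq
      rcases lt_trichotomy s p with hsp | rfl | hps
      · exact (collapse_lt_collapse hS hsp fun _ => (h s hs).symm).ne heq
      · exact hp hs
      · exact (collapse_lt_collapse hS hps fun hpS => absurd hpS hp).ne' heq
    rw [spreadLeft, if_neg hnot, add_zero, spread_collapse hS h]

end Relabel

def nonmax (s : Finset ℕ) : Finset ℕ := s.filter fun j => ∃ j' ∈ s, j < j'

lemma card_nonmax (s : Finset ℕ) : #(nonmax s) = #s - 1 := by
  rcases s.eq_empty_or_nonempty with rfl | hs
  · simp [nonmax]
  have herase : nonmax s = s.erase (s.max' hs) := by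
    ext j
    simp only [nonmax, mem_filter, mem_erase]
    constructor
    · rintro ⟨hj, j', hj', hjj'⟩
      exact ⟨(hjj'.trans_le (s.le_max' j' hj')).ne, hj⟩
    · rintro ⟨hne, hj⟩
      exact ⟨hj, s.max' hs, s.max'_mem hs, lt_of_le_of_ne (s.le_max' j hj) hne⟩
  rw [herase, card_erase_of_mem (s.max'_mem hs)]

lemma nonmax_image {s : Finset ℕ} {F : ℕ → ℕ} (hF : StrictMonoOn F s) :
    nonmax (s.image F) = (nonmax s).image F := by
  ext x
  simp only [nonmax, mem_filter, mem_image, exists_exists_and_eq_and]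
  constructor
  · rintro ⟨⟨j, hj, rfl⟩, j', hj', hlt⟩
    exact ⟨j, ⟨hj, j', hj', (hF.lt_iff_lt hj hj').1 hlt⟩, rfl⟩
  · rintro ⟨j, ⟨hj, j', hj', hlt⟩, rfl⟩
    exact ⟨⟨j, hj, rfl⟩, j', hj', hF hj hj' hlt⟩

def rightEnds (A : Finset (ℕ × ℕ)) : Finset ℕ := A.image Prod.snd

/-- The right endpoints that are glued to the vertex after them: all but the last one. -/
def glued (A : Finset (ℕ × ℕ)) : Finset ℕ := nonmax (rightEnds A)

def contract (A : Finset (ℕ × ℕ)) : Finset (ℕ × ℕ) :=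
  A.image fun q => (collapse (glued A) q.1, collapse (glued A) q.2)

def expand (A : Finset (ℕ × ℕ)) : Finset (ℕ × ℕ) :=
  A.image fun q => (spreadLeft (glued A) q.1, spread (glued A) q.2)

section Diagram

variable {n m : ℕ} {A : Finset (ℕ × ℕ)} {p : ℕ × ℕ}

lemma snd_mem_rightEnds (hp : p ∈ A) : p.2 ∈ rightEnds A := mem_image_of_mem _ hp

lemma rightEnds_image (G F : ℕ → ℕ) (A : Finset (ℕ × ℕ)) :
    rightEnds (A.image fun q => (G q.1, F q.2)) = (rightEnds A).image F := by
  simp only [rightEnds, image_image]; rfl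

lemma glued_subset_rightEnds : glued A ⊆ rightEnds A := filter_subset _ _

lemma mem_glued {i j : ℕ} (hi : i ∈ rightEnds A) (hj : j ∈ rightEnds A) (hij : i < j) :
    i ∈ glued A :=
  mem_filter.2 ⟨hi, j, hj, hij⟩

lemma _root_.IsMatching.isPartitionDiagram (hA : IsMatching m A) : IsPartitionDiagram m A :=
  ⟨hA.1, fun p hp q hq hpq => ⟨(hA.2 p hp q hq hpq).1, (hA.2 p hp q hq hpq).2.2.2⟩⟩

lemma card_image_of_injOn_rightEnds (hA : IsPartitionDiagram n A) {G F : ℕ → ℕ}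
    (hF : Set.InjOn F (rightEnds A)) : #(A.image fun q => (G q.1, F q.2)) = #A := by
  refine card_image_of_injOn fun p hp q hq hpq => ?_
  by_contra hne
  exact (hA.2 p hp q hq hne).2 (hF (snd_mem_rightEnds hp) (snd_mem_rightEnds hq)
    (congrArg Prod.snd hpq))

lemma card_glued (hA : IsPartitionDiagram n A) : #(glued A) = #A - 1 := by
  have hcard : #(rightEnds A) = #A := card_image_of_injOn fun p hp q hq hpq =>
    by_contra fun hne => (hA.2 p hp q hq hne).2 hpq
  rw [glued, card_nonmax, hcard]

end Diagram

section Matching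

variable {n m : ℕ} {M : Finset (ℕ × ℕ)}

lemma _root_.IsMatching.fst_notMem_rightEnds (hM : IsMatching m M) {p : ℕ × ℕ} (hp : p ∈ M) :
    p.1 ∉ rightEnds M := by
  simp only [rightEnds, mem_image, not_exists, not_and]
  intro q hq hqp
  by_cases hpq : p = q
  · subst hpq; have := (hM.1 p hp).2.1; omega
  · exact (hM.2 p hp q hq hpq).2.1 hqp.symm

lemma noTwoConsecutive_rightEnds (hM : IsMatching m M) (h2 : ¬ Has2RightCrossing M)
    (hN : ¬ HasRightNesting M) : NoTwoConsecutive (rightEnds M) := by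
  simp only [NoTwoConsecutive, rightEnds, mem_image]
  rintro _ ⟨p, hp, rfl⟩ ⟨q, hq, hqp⟩
  have hpq : p ≠ q := by rintro rfl; omega
  obtain ⟨h11, -, h21, -⟩ := hM.2 p hp q hq hpq
  have := (hM.1 p hp).2.1
  have := (hM.1 q hq).2.1
  rcases lt_or_gt_of_ne h11 with h | h
  · exact h2 ⟨p, hp, q, hq, h, by omega, by omega, by omega⟩
  · exact hN ⟨q, hq, p, hp, h, by omega, by omega, by omega⟩

lemma isPartitionDiagram_contract (hRE : NoTwoConsecutive (rightEnds M))
    (hM : IsMatching (n + #M - 1) M) :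
    IsPartitionDiagram n (contract M) := by
  have hS : NoTwoConsecutive (glued M) := hRE.mono glued_subset_rightEnds
  have hfst : ∀ p ∈ M, p.1 ∉ glued M := fun p hp h =>
    hM.fst_notMem_rightEnds hp (glued_subset_rightEnds h)
  have hlast : collapse (glued M) (n + #M - 1) ≤ n := by
    have hlt : ∀ s ∈ glued M, s < n + #M - 1 := by
      intro s hs
      obtain ⟨-, _, hj, hsj⟩ := mem_filter.1 hs
      obtain ⟨q, hq, rfl⟩ := mem_image.1 hj
      exact hsj.trans_le (hM.1 q hq).2.2
    rw [collapse, below_eq_card hlt, card_glued hM.isPartitionDiagram]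
    omega
  have h0 : 0 ∉ glued M := fun h0 => by
    obtain ⟨q, hq, hq0⟩ := mem_image.1 (glued_subset_rightEnds h0)
    have := (hM.1 q hq).2.1
    omega
  refine ⟨?_, ?_⟩
  · simp only [contract, mem_image]
    rintro _ ⟨p, hp, rfl⟩
    obtain ⟨h1, h12, h2⟩ := hM.1 p hp
    exact ⟨one_le_collapse h0 h1, collapse_lt_collapse hS h12 fun h => absurd h (hfst p hp),
      (collapse_mono h2).trans hlast⟩
  · simp only [contract, mem_image]
    rintro _ ⟨p, hp, rfl⟩ _ ⟨q, hq, rfl⟩ hne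
    have hpq : p ≠ q := by rintro rfl; exact hne rfl
    obtain ⟨h11, -, -, h22⟩ := hM.2 p hp q hq hpq
    exact ⟨fun h => h11 ((strictMonoOn_collapse_compl hS).injOn (hfst p hp) (hfst q hq) h),
      fun h => h22 ((strictMonoOn_collapse hRE glued_subset_rightEnds).injOn
        (snd_mem_rightEnds hp) (snd_mem_rightEnds hq) h)⟩

lemma card_contract (hRE : NoTwoConsecutive (rightEnds M)) (hM : IsPartitionDiagram m M) :
    #(contract M) = #M :=
  card_image_of_injOn_rightEnds hM (strictMonoOn_collapse hRE glued_subset_rightEnds).injOn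

lemma not_hasRightCrossing_contract (hRE : NoTwoConsecutive (rightEnds M))
    (h2 : ¬ Has2RightCrossing M) :
    ¬ HasRightCrossing (contract M) := by
  have hS : NoTwoConsecutive (glued M) := hRE.mono glued_subset_rightEnds
  simp only [HasRightCrossing, contract, mem_image]
  rintro ⟨_, ⟨p, hp, rfl⟩, _, ⟨q, hq, rfl⟩, h1, h12, h22, hadj⟩
  have hpq : p.2 < q.2 := lt_of_collapse_lt h22
  have hpS : p.2 ∈ glued M := mem_glued (snd_mem_rightEnds hp) (snd_mem_rightEnds hq) hpq
  have hq1 : q.2 ≠ p.2 + 1 := fun h =>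
    hRE _ (snd_mem_rightEnds hp) (h ▸ snd_mem_rightEnds hq)
  by_cases hq2 : q.2 = p.2 + 2
  · exact h2 ⟨p, hp, q, hq, lt_of_collapse_lt h1, lt_of_collapse_lt h12, hpq, hq2.le⟩
  · have hfar : collapse (glued M) (p.2 + 2) < collapse (glued M) q.2 :=
      collapse_lt_collapse hS (by omega) fun hs h =>
        hRE _ (glued_subset_rightEnds hs) (h ▸ snd_mem_rightEnds hq)
    rw [collapse_add_two hS hpS] at hfar
    omega

lemma glued_contract (hRE : NoTwoConsecutive (rightEnds M)) :
    glued (contract M) = (glued M).image (collapse (glued M)) :=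
  (congrArg nonmax (rightEnds_image _ _ M)).trans
    (nonmax_image (strictMonoOn_collapse hRE glued_subset_rightEnds))

lemma expand_contract (hRE : NoTwoConsecutive (rightEnds M)) (hM : IsMatching m M) :
    expand (contract M) = M := by
  have hS : NoTwoConsecutive (glued M) := hRE.mono glued_subset_rightEnds
  rw [expand, glued_contract hRE, contract, image_image]
  refine (image_congr fun p hp => ?_).trans image_id
  refine Prod.ext (spreadLeft_collapse hS fun h => ?_) (spread_collapse hS fun s hs h => ?_)
  · exact hM.fst_notMem_rightEnds hp (glued_subset_rightEnds h)
  · exact hRE s (glued_subset_rightEnds hs) (h ▸ snd_mem_rightEnds hp)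

end Matching

section Partition

variable {n : ℕ} {P : Finset (ℕ × ℕ)}

lemma isMatching_expand (hP : IsPartitionDiagram n P) : IsMatching (n + #P - 1) (expand P) := by
  have hfst : ∀ p ∈ P, p.1 ∈ rightEnds P → p.1 ∈ glued P := fun p hp h =>
    mem_glued h (snd_mem_rightEnds hp) (hP.1 p hp).2.1
  refine ⟨?_, ?_⟩
  · simp only [expand, mem_image]
    rintro _ ⟨p, hp, rfl⟩
    obtain ⟨h1, h12, h2⟩ := hP.1 p hp
    have hpos : 0 < #P := card_pos.2 ⟨p, hp⟩
    have hbelow := below_le_card (glued P) p.2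
    have hleft : p.1 ≤ spreadLeft (glued P) p.1 :=
      (Nat.le_add_right _ _).trans spread_le_spreadLeft
    rw [card_glued hP] at hbelow
    exact ⟨by omega, spreadLeft_lt_spread h12, by rw [spread]; omega⟩
  · simp only [expand, mem_image]
    rintro _ ⟨p, hp, rfl⟩ _ ⟨q, hq, rfl⟩ hne
    have hpq : p ≠ q := by rintro rfl; exact hne rfl
    obtain ⟨h11, h22⟩ := hP.2 p hp q hq hpq
    exact ⟨fun h => h11 (spreadLeft_strictMono.injective h),
      spreadLeft_ne_spread fun h => hfst p hp (h ▸ snd_mem_rightEnds hq),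
      (spreadLeft_ne_spread fun h => hfst q hq (h ▸ snd_mem_rightEnds hp)).symm,
      fun h => h22 (spread_strictMono.injective h)⟩

lemma card_expand (hP : IsPartitionDiagram n P) : #(expand P) = #P :=
  card_image_of_injOn_rightEnds hP spread_strictMono.injective.injOn

lemma not_has2RightCrossing_expand (hRC : ¬ HasRightCrossing P) :
    ¬ Has2RightCrossing (expand P) := by
  simp only [Has2RightCrossing, expand, mem_image]
  rintro ⟨_, ⟨p, hp, rfl⟩, _, ⟨q, hq, rfl⟩, h1, h12, h22, hnear⟩
  dsimp only at h1 h12 h22 hnear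
  have hpq : p.2 < q.2 := spread_strictMono.lt_iff_lt.1 h22
  have hnext := spread_succ (glued P) p.2
  rw [if_pos (mem_glued (snd_mem_rightEnds hp) (snd_mem_rightEnds hq) hpq)] at hnext
  have hq2 : q.2 ≤ p.2 + 1 := (spread_strictMono (S := glued P)).le_iff_le.1 (by omega)
  exact hRC ⟨p, hp, q, hq, spreadLeft_strictMono.lt_iff_lt.1 h1,
    lt_of_spreadLeft_lt_spread h12, hpq, by omega⟩

lemma not_hasRightNesting_expand (P : Finset (ℕ × ℕ)) : ¬ HasRightNesting (expand P) := by
  simp only [HasRightNesting, expand, mem_image]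
  rintro ⟨_, ⟨p, hp, rfl⟩, _, ⟨q, hq, rfl⟩, -, -, h22, hadj⟩
  dsimp only at h22 hadj
  have hqp : q.2 < p.2 := spread_strictMono.lt_iff_lt.1 h22
  have hnext := spread_succ (glued P) q.2
  rw [if_pos (mem_glued (snd_mem_rightEnds hq) (snd_mem_rightEnds hp) hqp)] at hnext
  have := (spread_strictMono (S := glued P)).monotone (show q.2 + 1 ≤ p.2 from hqp)
  omega

lemma glued_expand (P : Finset (ℕ × ℕ)) :
    glued (expand P) = (glued P).image (spread (glued P)) :=
  (congrArg nonmax (rightEnds_image _ _ P)).trans (nonmax_image (spread_strictMono.strictMonoOn _))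

lemma contract_expand (P : Finset (ℕ × ℕ)) : contract (expand P) = P := by
  rw [contract, glued_expand, expand, image_image]
  exact (image_congr fun p _ => Prod.ext (collapse_spreadLeft _ _) (collapse_spread _ _)).trans
    image_id

end Partition

lemma contract_mem_CTSet {n k : ℕ} {M : Finset (ℕ × ℕ)} (hM : M ∈ PMSet (n + k - 1) k) :
    contract M ∈ CTSet n k := by
  obtain ⟨hmat, rfl, h2, hN⟩ := hM
  have hRE := noTwoConsecutive_rightEnds hmat h2 hN
  exact ⟨isPartitionDiagram_contract hRE hmat, card_contract hRE hmat.isPartitionDiagram,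
    not_hasRightCrossing_contract hRE h2⟩

lemma expand_mem_PMSet {n k : ℕ} {P : Finset (ℕ × ℕ)} (hP : P ∈ CTSet n k) :
    expand P ∈ PMSet (n + k - 1) k := by
  obtain ⟨hpart, rfl, hRC⟩ := hP
  exact ⟨isMatching_expand hpart, card_expand hpart, not_has2RightCrossing_expand hRC,
    not_hasRightNesting_expand P⟩

def pmSetEquivCTSet (n k : ℕ) : ↥(PMSet (n + k - 1) k) ≃ ↥(CTSet n k) where
  toFun M := ⟨contract M, contract_mem_CTSet M.2⟩
  invFun P := ⟨expand P, expand_mem_PMSet P.2⟩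
  left_inv M := Subtype.ext <| expand_contract
    (noTwoConsecutive_rightEnds M.2.1 M.2.2.2.1 M.2.2.2.2) M.2.1
  right_inv P := Subtype.ext (contract_expand P)

end ArcDiagram

theorem stmt6_general (n k : ℕ) :
    Nonempty (↥(PMSet (n + k - 1) k) ≃ ↥(CTSet n k)) ∧
    (PMSet (n + k - 1) k).ncard = (CTSet n k).ncard :=
  ⟨⟨ArcDiagram.pmSetEquivCTSet n k⟩, Set.ncard_congr' (ArcDiagram.pmSetEquivCTSet n k)⟩

/-- There is a bijection between `P(n+k-1,k)` and `CT(n,k)`; in particular the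
two sets have the same cardinality. -/
theorem stmt6 (n k : ℕ) (hn : 1 ≤ n) (hk : k ≤ n - 1) :
    Nonempty (↥(PMSet (n + k - 1) k) ≃ ↥(CTSet n k)) ∧
    (PMSet (n + k - 1) k).ncard = (CTSet n k).ncard :=
  stmt6_general n k
end

section
/- For all n ≥ 1 and 0 ≤ k ≤ n-1, the number CT(n,k) of partitions of [n] with k arcs avoiding right crossings equals the number S(n,k) of admissible integer sequences of length n with n-k left-to-right maxima. -/
open Finset

/-!
Read a diagram from left to right. Just before vertex `i + 1` the open vertices are those of
`[1, i]` that are not the left end of an arc ending at or before `i`; vertex `i + 1` is coded by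
the rank of its left partner among them, or by their number if it closes no arc. There is always
one more open vertex than the running maximum of the code, so the left-to-right maxima are the
vertices closing no arc and the other indices count the arcs. For arcs `(a, j + 1)` and
`(b, j + 2)` with `b < j + 1`, the code descends from `j` to `j + 1` iff `b < a`, so the descent
condition of `S(n, k)` says precisely that there is no right crossing. Reading a sequence back
vertex by vertex inverts the coding.
-/

section IsPartitionDiagram

variable {n : ℕ} {P : Finset (ℕ × ℕ)}

lemma IsPartitionDiagram.mono {m : ℕ} (hP : IsPartitionDiagram m P) (h : m ≤ n) :
    IsPartitionDiagram n P :=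
  ⟨fun p hp => (hP.1 p hp).imp_right fun hp' => ⟨hp'.1, hp'.2.trans h⟩, hP.2⟩

lemma IsPartitionDiagram.left_eq {a b t : ℕ} (hP : IsPartitionDiagram n P)
    (ha : (a, t) ∈ P) (hb : (b, t) ∈ P) : a = b := by
  by_contra hab
  exact (hP.2 _ ha _ hb (by simp [hab])).2 rfl

lemma IsPartitionDiagram.right_eq {b s t : ℕ} (hP : IsPartitionDiagram n P)
    (hs : (b, s) ∈ P) (ht : (b, t) ∈ P) : s = t := by
  by_contra hst
  exact (hP.2 _ hs _ ht (by simp [hst])).1 rfl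

end IsPartitionDiagram

namespace PartitionDiagram

section Rank

variable {S : Finset ℕ} {a b r t : ℕ}

def rank (S : Finset ℕ) (b : ℕ) : ℕ := #{v ∈ S | v < b}

lemma rank_eq_count (S : Finset ℕ) (b : ℕ) : rank S b = Nat.count (· ∈ S) b := by
  rw [Nat.count_eq_card_filter_range, rank]
  congr 1
  ext v
  simp only [mem_filter, mem_range]
  tauto

lemma toFinset_ofPred_mem (S : Finset ℕ) (h : (Set.ofPred (· ∈ S)).Finite) :
    h.toFinset = S := by
  ext v
  simp [Set.ofPred]

lemma nth_mem (h : r < #S) : Nat.nth (· ∈ S) r ∈ S :=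
  Nat.nth_mem_of_lt_card S.finite_toSet (by rwa [toFinset_ofPred_mem])

lemma rank_nth (h : r < #S) : rank S (Nat.nth (· ∈ S) r) = r := by
  rw [rank_eq_count]
  exact Nat.count_nth_of_lt_card_finite S.finite_toSet (by rwa [toFinset_ofPred_mem])

lemma nth_rank (hb : b ∈ S) : Nat.nth (· ∈ S) (rank S b) = b := by
  rw [rank_eq_count]
  exact Nat.nth_count hb

lemma rank_lt_card (hb : b ∈ S) : rank S b < #S :=
  card_lt_card (filter_ssubset.2 ⟨b, hb, lt_irrefl b⟩)

lemma rank_lt_rank (ha : a ∈ S) (hab : a < b) : rank S a < rank S b := by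
  simp only [rank_eq_count]
  exact Nat.count_strict_mono ha hab

lemma rank_add_one_eq_card (ht : t ∈ S) (h : ∀ v ∈ S, v ≤ t) : rank S t + 1 = #S := by
  have : {v ∈ S | v < t} = S.erase t := by
    ext v
    simp only [mem_filter, mem_erase]
    exact ⟨fun hv => ⟨hv.2.ne, hv.1⟩, fun hv => ⟨hv.2, (h v hv.2).lt_of_ne hv.1⟩⟩
  rw [rank, this, card_erase_add_one ht]

lemma rank_insert_of_le (h : b ≤ t) : rank (insert t S) b = rank S b := by
  rw [rank, filter_insert, if_neg (by omega), rank]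

lemma rank_erase_of_le (h : b ≤ a) : rank (S.erase a) b = rank S b := by
  rw [rank, filter_erase, erase_eq_of_notMem fun ha => absurd (mem_filter.1 ha).2 (by omega), rank]

lemma rank_erase_add_one (ha : a ∈ S) (h : a < b) : rank (S.erase a) b + 1 = rank S b := by
  rw [rank, filter_erase, card_erase_add_one (mem_filter.2 ⟨ha, h⟩), rank]

end Rank

lemma lmax_succ (x : ℕ → ℕ) (i : ℕ) : lmax x (i + 1) = max (lmax x i) (x i) := by
  rw [lmax, range_add_one, sup_insert, lmax, max_comm]

lemma lmax_congr {x y : ℕ → ℕ} {i : ℕ} (h : ∀ j < i, x j = y j) : lmax x i = lmax y i :=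
  sup_congr rfl fun j hj => h j (mem_range.1 hj)

variable {n : ℕ} {P Q : Finset (ℕ × ℕ)}

def openVertices (P : Finset (ℕ × ℕ)) (t : ℕ) : Finset ℕ :=
  {v ∈ Ico 1 t | ∀ p ∈ P, p.1 = v → t ≤ p.2}

lemma mem_openVertices {t v : ℕ} :
    v ∈ openVertices P t ↔ (1 ≤ v ∧ v < t) ∧ ∀ p ∈ P, p.1 = v → t ≤ p.2 := by
  simp [openVertices]

lemma lt_of_mem_openVertices {t v : ℕ} (hv : v ∈ openVertices P t) : v < t :=
  (mem_openVertices.1 hv).1.2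

lemma openVertices_one : openVertices P 1 = ∅ := by
  simp [openVertices]

lemma openVertices_congr {t : ℕ} (h : ∀ p : ℕ × ℕ, p.2 < t → (p ∈ P ↔ p ∈ Q)) :
    openVertices P t = openVertices Q t := by
  ext v
  simp only [mem_openVertices, and_congr_right_iff]
  refine fun _ => ⟨fun hP q hq hqv => ?_, fun hQ p hp hpv => ?_⟩
  · by_contra! hlt
    exact absurd (hP q ((h q hlt).2 hq) hqv) (by omega)
  · by_contra! hlt
    exact absurd (hQ p ((h p hlt).1 hp) hpv) (by omega)

lemma self_mem_openVertices_succ {t : ℕ} (hP : IsPartitionDiagram n P) (ht : 1 ≤ t) :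
    t ∈ openVertices P (t + 1) :=
  mem_openVertices.2 ⟨⟨ht, t.lt_succ_self⟩, fun p hp hpt => by have := (hP.1 p hp).2.1; omega⟩

lemma le_of_mem_openVertices_succ {t v : ℕ} (hv : v ∈ openVertices P (t + 1)) : v ≤ t :=
  Nat.le_of_lt_succ (lt_of_mem_openVertices hv)

lemma left_mem_openVertices {b t : ℕ} (hP : IsPartitionDiagram n P) (hb : (b, t) ∈ P) :
    b ∈ openVertices P t := by
  refine mem_openVertices.2 ⟨⟨(hP.1 _ hb).1, (hP.1 _ hb).2.1⟩, fun ⟨c, s⟩ hp hc => ?_⟩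
  subst hc
  exact (hP.right_eq hb hp).le

lemma openVertices_succ_of_forall_notMem {t : ℕ} (hP : IsPartitionDiagram n P) (ht : 1 ≤ t)
    (h : ∀ a, (a, t) ∉ P) : openVertices P (t + 1) = insert t (openVertices P t) := by
  ext v
  simp only [mem_openVertices, mem_insert]
  constructor
  · rintro ⟨⟨h1, h2⟩, h3⟩
    refine (Nat.lt_succ_iff_lt_or_eq.1 h2).symm.imp id fun hvt => ⟨⟨h1, hvt⟩, fun p hp hpv => ?_⟩
    have := h3 p hp hpv
    omega
  · rintro (rfl | ⟨⟨h1, h2⟩, h3⟩)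
    · exact mem_openVertices.1 (self_mem_openVertices_succ hP ht)
    · refine ⟨⟨h1, by omega⟩, fun p hp hpv => ?_⟩
      obtain rfl | hlt := (h3 p hp hpv).eq_or_lt
      · exact absurd hp (h p.1)
      · exact hlt

lemma openVertices_succ_of_mem {b t : ℕ} (hP : IsPartitionDiagram n P) (hb : (b, t) ∈ P) :
    openVertices P (t + 1) = insert t ((openVertices P t).erase b) := by
  ext v
  simp only [mem_openVertices, mem_insert, mem_erase]
  constructor
  · rintro ⟨⟨h1, h2⟩, h3⟩
    refine (Nat.lt_succ_iff_lt_or_eq.1 h2).symm.imp id fun hvt => ?_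
    refine ⟨?_, ⟨h1, hvt⟩, fun p hp hpv => ?_⟩
    · rintro rfl
      have := h3 _ hb rfl
      omega
    · have := h3 p hp hpv
      omega
  · have hbt := (hP.1 _ hb).2.1
    rintro (rfl | ⟨hvb, ⟨h1, h2⟩, h3⟩)
    · exact ⟨⟨by omega, v.lt_succ_self⟩, fun p hp hpv => by have := (hP.1 p hp).2.1; omega⟩
    · refine ⟨⟨h1, by omega⟩, fun ⟨c, s⟩ hp hpv => ?_⟩
      obtain rfl | hts := (h3 _ hp hpv).eq_or_lt
      · exact absurd (hpv.symm.trans (hP.left_eq hp hb)) hvb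
      · exact hts

/-- The rank of the left partner of vertex `i + 1` among the open vertices, or the number of
open vertices if `i + 1` closes no arc. -/
def code (P : Finset (ℕ × ℕ)) (i : ℕ) : ℕ :=
  #{v ∈ openVertices P (i + 1) | ∀ p ∈ P, p.2 = i + 1 → v < p.1}

lemma code_congr {i : ℕ} (h : ∀ p : ℕ × ℕ, p.2 ≤ i + 1 → (p ∈ P ↔ p ∈ Q)) :
    code P i = code Q i := by
  rw [code, code, openVertices_congr fun p hp => h p hp.le]
  congr 1
  refine filter_congr fun v _ => ⟨fun hP q hq hqi => hP q ((h q hqi.le).2 hq) hqi,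
    fun hQ p hp hpi => hQ p ((h p hpi.le).1 hp) hpi⟩

lemma code_of_mem {b i : ℕ} (hP : IsPartitionDiagram n P) (hb : (b, i + 1) ∈ P) :
    code P i = rank (openVertices P (i + 1)) b := by
  rw [code, rank]
  congr 1
  refine filter_congr fun v _ => ⟨fun h => h _ hb rfl, fun h ⟨c, s⟩ hp hs => ?_⟩
  subst hs
  rwa [hP.left_eq hp hb]

lemma code_of_forall_notMem {i : ℕ} (h : ∀ a, (a, i + 1) ∉ P) :
    code P i = #(openVertices P (i + 1)) := by
  rw [code, filter_true_of_mem fun v _ p hp hpi => absurd (hpi ▸ hp) (h p.1)]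

lemma code_zero : code P 0 = 0 := by
  simp [code, openVertices_one]

lemma card_openVertices_succ_of_mem {b t : ℕ} (hP : IsPartitionDiagram n P)
    (hb : (b, t) ∈ P) : #(openVertices P (t + 1)) = #(openVertices P t) := by
  rw [openVertices_succ_of_mem hP hb,
    card_insert_of_notMem fun h => (lt_irrefl t) (lt_of_mem_openVertices (mem_erase.1 h).2),
    card_erase_add_one (left_mem_openVertices hP hb)]

lemma card_openVertices_succ_of_forall_notMem {t : ℕ} (hP : IsPartitionDiagram n P)
    (ht : 1 ≤ t) (h : ∀ a, (a, t) ∉ P) :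
    #(openVertices P (t + 1)) = #(openVertices P t) + 1 := by
  rw [openVertices_succ_of_forall_notMem hP ht h,
    card_insert_of_notMem fun h => (lt_irrefl t) (lt_of_mem_openVertices h)]

lemma lmax_code_add_one {i : ℕ} (hP : IsPartitionDiagram n P) (hi : 1 ≤ i) :
    lmax (code P) i + 1 = #(openVertices P (i + 1)) := by
  induction i, hi using Nat.le_induction with
  | base =>
    have hnone : ∀ a, (a, 1) ∉ P := fun a ha => by
      obtain ⟨h1, h2, -⟩ := hP.1 _ ha
      dsimp only at h1 h2
      omega
    rw [card_openVertices_succ_of_forall_notMem hP le_rfl hnone, openVertices_one]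
    simp [lmax, code_zero]
  | succ i hi ih =>
    rw [lmax_succ]
    by_cases h : ∃ a, (a, i + 1) ∈ P
    · obtain ⟨a, ha⟩ := h
      have hlt := rank_lt_card (left_mem_openVertices hP ha)
      rw [← code_of_mem hP ha] at hlt
      rw [max_eq_left (by omega), card_openVertices_succ_of_mem hP ha, ih]
    · rw [code_of_forall_notMem (not_exists.1 h), max_eq_right (by omega),
        card_openVertices_succ_of_forall_notMem hP (by omega) (not_exists.1 h)]

lemma lmax_lt_code_iff {i : ℕ} (hP : IsPartitionDiagram n P) (hi : 1 ≤ i) :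
    lmax (code P) i < code P i ↔ ∀ a, (a, i + 1) ∉ P := by
  have hcard := lmax_code_add_one hP hi
  refine ⟨fun hlt a ha => ?_, fun h => by rw [code_of_forall_notMem h]; omega⟩
  have := rank_lt_card (left_mem_openVertices hP ha)
  rw [code_of_mem hP ha] at hlt
  omega

lemma code_le_lmax_add_one {i : ℕ} (hP : IsPartitionDiagram n P) (hi : 1 ≤ i) :
    code P i ≤ lmax (code P) i + 1 := by
  rw [lmax_code_add_one hP hi]
  by_cases h : ∃ a, (a, i + 1) ∈ P
  · obtain ⟨a, ha⟩ := h
    exact (code_of_mem hP ha).trans_le (rank_lt_card (left_mem_openVertices hP ha)).le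
  · exact (code_of_forall_notMem (not_exists.1 h)).le

/-- `i` is the largest open vertex at `i + 1`, of rank `lmax (code P) i`. -/
lemma code_lt_lmax_iff {i : ℕ} (hP : IsPartitionDiagram n P) (hi : 1 ≤ i) :
    code P i < lmax (code P) i ↔ ∃ b < i, (b, i + 1) ∈ P := by
  have hcard := lmax_code_add_one hP hi
  have hself := self_mem_openVertices_succ hP hi
  have htop := rank_add_one_eq_card hself fun v => le_of_mem_openVertices_succ
  constructor
  · intro hlt
    by_contra! hnone
    by_cases h : ∃ b, (b, i + 1) ∈ P
    · obtain ⟨b, hb⟩ := h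
      have hbi := le_of_mem_openVertices_succ (left_mem_openVertices hP hb)
      obtain rfl : b = i := le_antisymm hbi (not_lt.1 fun hbi' => hnone b hbi' hb)
      rw [code_of_mem hP hb] at hlt
      omega
    · rw [code_of_forall_notMem (not_exists.1 h)] at hlt
      omega
  · rintro ⟨b, hbi, hb⟩
    rw [code_of_mem hP hb]
    have := rank_lt_rank (left_mem_openVertices hP hb) hbi
    omega

lemma code_succ_lt_code_iff {a b j : ℕ} (hP : IsPartitionDiagram n P) (ha : (a, j + 1) ∈ P)
    (hb : (b, j + 2) ∈ P) (hbj : b < j + 1) : code P (j + 1) < code P j ↔ b < a := by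
  have haU := left_mem_openVertices hP ha
  have hU := openVertices_succ_of_mem hP ha
  have hba : b ≠ a := by
    rintro rfl
    exact absurd (hP.right_eq ha hb) (by omega)
  have hbU : b ∈ openVertices P (j + 1) := by
    have := left_mem_openVertices hP hb
    rw [hU, mem_insert, mem_erase] at this
    exact this.resolve_left hbj.ne |>.2
  rw [code_of_mem hP hb, code_of_mem hP ha, hU, rank_insert_of_le hbj.le]
  constructor
  · intro hlt
    by_contra! hab
    have := rank_erase_add_one haU (hab.lt_of_ne hba.symm)
    have := rank_lt_rank haU (hab.lt_of_ne hba.symm)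
    omega
  · intro hba
    rw [rank_erase_of_le hba.le]
    exact rank_lt_rank hbU hba

lemma not_hasRightCrossing_iff (hP : IsPartitionDiagram n P) :
    ¬ HasRightCrossing P ↔
      ∀ i, 1 ≤ i → i < n → code P i < lmax (code P) i → code P i < code P (i - 1) := by
  constructor
  · intro hnc i hi _ hlt
    obtain ⟨b, hbi, hb⟩ := (code_lt_lmax_iff hP hi).1 hlt
    obtain ⟨j, rfl⟩ : ∃ j, i = j + 1 := ⟨i - 1, by omega⟩
    rw [Nat.add_sub_cancel]
    by_cases h : ∃ a, (a, j + 1) ∈ P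
    · obtain ⟨a, ha⟩ := h
      refine (code_succ_lt_code_iff hP ha hb hbi).2 (lt_of_le_of_ne (not_lt.1 fun hab => ?_) ?_)
      · exact hnc ⟨(a, j + 1), ha, (b, j + 2), hb, hab, hbi, by simp, rfl⟩
      · rintro rfl
        exact absurd (hP.right_eq ha hb) (by omega)
    · have hle : lmax (code P) j ≤ code P j := by
        rcases Nat.eq_zero_or_pos j with rfl | hj
        · simp [lmax]
        · exact ((lmax_lt_code_iff hP hj).2 (not_exists.1 h)).le
      rwa [lmax_succ, max_eq_right hle] at hlt
  · rintro hdesc ⟨⟨a, s⟩, ha, ⟨b, t⟩, hb, hab, hbs, -, rfl⟩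
    dsimp only at hab hbs ha hb
    obtain ⟨j, rfl⟩ : ∃ j, s = j + 1 := ⟨s - 1, by omega⟩
    have hlt := (code_lt_lmax_iff hP (by omega)).2 ⟨b, hbs, hb⟩
    have hdrop := hdesc (j + 1) (by omega) (by have := (hP.1 _ hb).2.2; omega) hlt
    rw [Nat.add_sub_cancel, code_succ_lt_code_iff hP ha hb hbs] at hdrop
    omega

/-- The indices that are not left-to-right maxima are the `j - 1` for right endpoints `j`. -/
lemma card_filter_not_isLTRMax_code (hP : IsPartitionDiagram n P) :
    #{i ∈ range n | ¬(i = 0 ∨ lmax (code P) i < code P i)} = #P := by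
  have hinj : Set.InjOn (fun p : ℕ × ℕ => p.2 - 1) P := by
    intro p hp q hq hpq
    by_contra hne
    have := (hP.2 p hp q hq hne).2
    have := (hP.1 p hp).2.1
    have := (hP.1 q hq).2.1
    dsimp only at hpq
    omega
  rw [← card_image_of_injOn hinj]
  congr 1
  ext i
  simp only [mem_filter, mem_range, mem_image, not_or]
  constructor
  · rintro ⟨-, hi0, hle⟩
    obtain ⟨a, ha⟩ := not_forall_not.1 ((lmax_lt_code_iff hP (by omega)).not.1 hle)
    exact ⟨(a, i + 1), ha, rfl⟩
  · rintro ⟨⟨a, t⟩, hp, rfl⟩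
    obtain ⟨h1, h2, h3⟩ := hP.1 _ hp
    dsimp only at h1 h2 h3 ⊢
    refine ⟨by omega, by omega, fun hlt => (lmax_lt_code_iff hP (by omega)).1 hlt a ?_⟩
    rwa [Nat.sub_add_cancel (by omega)]

def encode (n : ℕ) (P : Finset (ℕ × ℕ)) (i : ℕ) : ℕ := if i < n then code P i else 0

lemma encode_of_lt {i : ℕ} (h : i < n) : encode n P i = code P i := if_pos h

lemma lmax_encode {i : ℕ} (h : i ≤ n) : lmax (encode n P) i = lmax (code P) i :=
  lmax_congr fun _ hj => encode_of_lt (hj.trans_le h)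

lemma encode_mem_seqSet_iff {k : ℕ} (hP : IsPartitionDiagram n P) (hk : k ≤ n) :
    encode n P ∈ SeqSet n k ↔ ¬ HasRightCrossing P ∧ #P = k := by
  have hzero : encode n P 0 = 0 := by
    simp [encode, code_zero]
  have hbound : ∀ i, 1 ≤ i → i < n → encode n P i ≤ lmax (encode n P) i + 1 :=
    fun i hi hin => by
      rw [encode_of_lt hin, lmax_encode hin.le]
      exact code_le_lmax_add_one hP hi
  have hdesc : (∀ i, 1 ≤ i → i < n → encode n P i < lmax (encode n P) i →
      encode n P i < encode n P (i - 1)) ↔ ¬ HasRightCrossing P := by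
    rw [not_hasRightCrossing_iff hP]
    refine forall_congr' fun i => forall_congr' fun _ => forall_congr' fun hin => ?_
    rw [encode_of_lt hin, encode_of_lt (by omega), lmax_encode hin.le]
  have hcount : #{i ∈ range n | i = 0 ∨ lmax (encode n P) i < encode n P i} = n - #P := by
    have hsplit := card_filter_add_card_filter_not (s := range n)
      (p := fun i => i = 0 ∨ lmax (code P) i < code P i)
    rw [card_filter_not_isLTRMax_code hP, card_range] at hsplit
    have hcongr := filter_congr (s := range n) (p := fun i => i = 0 ∨ lmax (encode n P) i <
      encode n P i) (q := fun i => i = 0 ∨ lmax (code P) i < code P i) fun i hi => by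
        rw [encode_of_lt (mem_range.1 hi), lmax_encode (mem_range.1 hi).le]
    rw [hcongr]
    omega
  have hPn : #P ≤ n := by
    rw [← card_filter_not_isLTRMax_code hP]
    exact (card_filter_le _ _).trans (card_range n).le
  simp only [SeqSet, Set.mem_ofPred_eq, hdesc, hcount]
  exact ⟨fun h => ⟨h.2.2.2.1, by omega⟩,
    fun h => ⟨fun i hi => if_neg (by omega), hzero, hbound, h.1, by omega⟩⟩

lemma encode_mem_seqSet {k : ℕ} (hP : P ∈ CTSet n k) (hk : k ≤ n) : encode n P ∈ SeqSet n k :=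
  (encode_mem_seqSet_iff hP.1 hk).2 ⟨hP.2.2, hP.2.1⟩

lemma isPartitionDiagram_insert {B : Finset (ℕ × ℕ)} {b t : ℕ} (hB : IsPartitionDiagram t B)
    (hb : b ∈ openVertices B (t + 1)) : IsPartitionDiagram (t + 1) (insert (b, t + 1) B) := by
  obtain ⟨⟨hb1, hbt⟩, hbB⟩ := mem_openVertices.1 hb
  have hnew : ∀ q ∈ B, b ≠ q.1 ∧ t + 1 ≠ q.2 := fun q hq => by
    have := (hB.1 q hq).2.2
    exact ⟨fun hbq => absurd (hbB q hq hbq.symm) (by omega), by omega⟩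
  refine ⟨fun p hp => ?_, fun p hp q hq hpq => ?_⟩
  · rcases mem_insert.1 hp with rfl | hp
    · exact ⟨hb1, hbt, le_rfl⟩
    · exact (hB.1 p hp).imp_right fun h => ⟨h.1, h.2.trans t.le_succ⟩
  · rcases mem_insert.1 hp with rfl | hp <;> rcases mem_insert.1 hq with rfl | hq
    · exact absurd rfl hpq
    · exact hnew q hq
    · exact (hnew p hp).imp Ne.symm Ne.symm
    · exact hB.2 p hp q hq hpq

noncomputable def decode (x : ℕ → ℕ) : ℕ → Finset (ℕ × ℕ)
  | 0 => ∅
  | t + 1 =>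
    if x t < #(openVertices (decode x t) (t + 1)) then
      insert (Nat.nth (· ∈ openVertices (decode x t) (t + 1)) (x t), t + 1) (decode x t)
    else decode x t

lemma mem_decode_succ_of_le {x : ℕ → ℕ} {t : ℕ} {p : ℕ × ℕ} (hp : p.2 ≤ t) :
    p ∈ decode x (t + 1) ↔ p ∈ decode x t := by
  rw [decode]
  split_ifs
  · exact mem_insert.trans (or_iff_right fun h => by rw [h] at hp; omega)
  · rfl

lemma decode_spec {x : ℕ → ℕ} (hx0 : x 0 = 0) (t : ℕ)
    (hbound : ∀ i, 1 ≤ i → i < t → x i ≤ lmax x i + 1) :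
    IsPartitionDiagram t (decode x t) ∧ ∀ i < t, code (decode x t) i = x i := by
  induction t with
  | zero => exact ⟨⟨by simp [decode], by simp [decode]⟩, fun i hi => absurd hi i.not_lt_zero⟩
  | succ t ih =>
    obtain ⟨hB, hcode⟩ := ih fun i h1 h2 => hbound i h1 (by omega)
    have hU : openVertices (decode x (t + 1)) (t + 1) = openVertices (decode x t) (t + 1) :=
      openVertices_congr fun p hp => mem_decode_succ_of_le (by omega)
    have hprefix : ∀ i < t, code (decode x (t + 1)) i = x i := fun i hi => by
      rw [← hcode i hi]
      exact code_congr fun p hp => mem_decode_succ_of_le (by omega)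
    suffices IsPartitionDiagram (t + 1) (decode x (t + 1)) ∧ code (decode x (t + 1)) t = x t from
      ⟨this.1, fun i hi => (Nat.lt_succ_iff_lt_or_eq.1 hi).elim (hprefix i) (· ▸ this.2)⟩
    by_cases hlt : x t < #(openVertices (decode x t) (t + 1))
    · have hdec : decode x (t + 1) = insert (Nat.nth (· ∈ openVertices (decode x t) (t + 1))
          (x t), t + 1) (decode x t) := by
        rw [decode, if_pos hlt]
      have hdiag := isPartitionDiagram_insert hB (nth_mem hlt)
      rw [← hdec] at hdiag
      refine ⟨hdiag, ?_⟩
      rw [code_of_mem hdiag (hdec ▸ mem_insert_self _ _), hU, rank_nth hlt]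
    · have hdec : decode x (t + 1) = decode x t := by
        rw [decode, if_neg hlt]
      have hnone : ∀ a, (a, t + 1) ∉ decode x t := fun a ha => by
        have := (hB.1 _ ha).2.2
        dsimp only at this
        omega
      refine ⟨hdec ▸ hB.mono t.le_succ, ?_⟩
      rw [hdec, code_of_forall_notMem hnone]
      rcases Nat.eq_zero_or_pos t with rfl | ht
      · rw [openVertices_one, card_empty, hx0]
      · have hcard := lmax_code_add_one hB ht
        rw [lmax_congr hcode] at hcard
        have := hbound t ht t.lt_succ_self
        omega

lemma encode_decode {x : ℕ → ℕ} {k : ℕ} (hx : x ∈ SeqSet n k) : encode n (decode x n) = x := by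
  obtain ⟨hzero, hx0, hbound, -⟩ := hx
  funext i
  by_cases hi : i < n
  · rw [encode_of_lt hi, (decode_spec hx0 n hbound).2 i hi]
  · rw [encode, if_neg hi, hzero i (not_lt.1 hi)]

lemma decode_mem_ctSet {x : ℕ → ℕ} {k : ℕ} (hx : x ∈ SeqSet n k) (hk : k ≤ n) :
    decode x n ∈ CTSet n k := by
  have hdiag := (decode_spec hx.2.1 n hx.2.2.1).1
  obtain ⟨hnc, hcard⟩ := (encode_mem_seqSet_iff hdiag hk).1 (by rwa [encode_decode hx])
  exact ⟨hdiag, hcard, hnc⟩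

lemma decode_encode (hP : IsPartitionDiagram n P) : decode (encode n P) n = P := by
  suffices h : ∀ t ≤ n, decode (encode n P) t = {p ∈ P | p.2 ≤ t} by
    rw [h n le_rfl, filter_true_of_mem fun p hp => (hP.1 p hp).2.2]
  intro t ht
  induction t with
  | zero =>
    refine (filter_false_of_mem fun p hp => ?_).symm
    have := (hP.1 p hp).2.1
    omega
  | succ t ih =>
    have hU : openVertices {p ∈ P | p.2 ≤ t} (t + 1) = openVertices P (t + 1) :=
      openVertices_congr fun p hp => by
        rw [mem_filter]
        exact and_iff_left (by omega)
    rw [decode, ih (by omega), hU, encode_of_lt (by omega)]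
    by_cases h : ∃ a, (a, t + 1) ∈ P
    · obtain ⟨a, ha⟩ := h
      have haU := left_mem_openVertices hP ha
      rw [code_of_mem hP ha, if_pos (rank_lt_card haU), nth_rank haU]
      ext ⟨c, s⟩
      simp only [mem_insert, mem_filter, Prod.mk.injEq]
      constructor
      · rintro (⟨rfl, rfl⟩ | ⟨hp, hs⟩)
        · exact ⟨ha, le_rfl⟩
        · exact ⟨hp, hs.trans t.le_succ⟩
      · rintro ⟨hp, hs⟩
        obtain hs | rfl := hs.lt_or_eq
        · exact Or.inr ⟨hp, Nat.le_of_lt_succ hs⟩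
        · exact Or.inl ⟨hP.left_eq hp ha, rfl⟩
    · rw [code_of_forall_notMem (not_exists.1 h), if_neg (lt_irrefl _)]
      refine filter_congr fun ⟨c, s⟩ hp => ⟨fun hs => hs.trans t.le_succ, fun hs => ?_⟩
      obtain hs | rfl := hs.lt_or_eq
      · exact Nat.le_of_lt_succ hs
      · exact absurd hp (not_exists.1 h c)

end PartitionDiagram

theorem stmt7_general (n k : ℕ) (hk : k ≤ n - 1) :
    (CTSet n k).ncard = (SeqSet n k).ncard := by
  have hkn : k ≤ n := hk.trans (Nat.sub_le n 1)
  have hinv : Set.InvOn (PartitionDiagram.decode · n) (PartitionDiagram.encode n)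
      (CTSet n k) (SeqSet n k) :=
    ⟨fun P hP => PartitionDiagram.decode_encode hP.1,
      fun x hx => PartitionDiagram.encode_decode hx⟩
  exact (hinv.bijOn (fun P hP => PartitionDiagram.encode_mem_seqSet hP hkn)
    (fun x hx => PartitionDiagram.decode_mem_ctSet hx hkn)).ncard_eq

/-- `CT(n,k) = S(n,k)` as cardinalities. -/
theorem stmt7 (n k : ℕ) (hn : 1 ≤ n) (hk : k ≤ n - 1) :
    (CTSet n k).ncard = (SeqSet n k).ncard :=
  stmt7_general n k hk
end

section
/- For all n ≥ 1 and 0 ≤ k ≤ n-1, the bijection between partial matchings in P(n+k-1,k) and partitions in CT(n,k) preserves statistics: the number of partial matchings in P(n+k-1,k) with exactly t neighbor alignments equals the number of partitions in CT(n,k) with exactly t transient vertices, for every t ≥ 0. -/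
open Finset

/-- Number of neighbor alignments of a partial matching: ordered pairs of arcs
`(i1,j1)`, `(i2,j2)` with `i2 = j1 + 1`. -/
def numNA (M : Finset (ℕ × ℕ)) : ℕ :=
  ((M ×ˢ M).filter (fun pq => pq.2.1 = pq.1.2 + 1)).card

/-- Number of transient vertices of a partition: vertices that are both a right
endpoint and a left endpoint of an arc. -/
def numTrans (P : Finset (ℕ × ℕ)) : ℕ :=
  ((P.image Prod.snd) ∩ (P.image Prod.fst)).card


namespace S8

/-- right endpoints -/
def rends (M : Finset (ℕ × ℕ)) : Finset ℕ := M.image Prod.snd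

/-- non-maximal right endpoints -/
def RS (M : Finset (ℕ × ℕ)) : Finset ℕ :=
  (rends M).filter (fun r => ∃ s ∈ rends M, r < s)

def cle (S : Finset ℕ) (m : ℕ) : ℕ := (S.filter (fun r => r ≤ m)).card
def clt (S : Finset ℕ) (m : ℕ) : ℕ := (S.filter (fun r => r < m)).card

def Phi (P : Finset (ℕ × ℕ)) : Finset (ℕ × ℕ) :=
  P.image (fun p => (p.1 + cle (RS P) p.1, p.2 + clt (RS P) p.2))

def Psi (M : Finset (ℕ × ℕ)) : Finset (ℕ × ℕ) :=
  M.image (fun p => (p.1 - clt (RS M) p.1, p.2 - clt (RS M) p.2))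

lemma RS_subset (M : Finset (ℕ × ℕ)) : RS M ⊆ rends M := filter_subset _ _

variable {S : Finset ℕ} {a b m : ℕ}

lemma clt_mono (h : a ≤ b) : clt S a ≤ clt S b := by
  apply card_le_card
  intro r hr
  simp only [mem_filter] at hr ⊢
  exact ⟨hr.1, by omega⟩

lemma cle_mono (h : a ≤ b) : cle S a ≤ cle S b := by
  apply card_le_card
  intro r hr
  simp only [mem_filter] at hr ⊢
  exact ⟨hr.1, by omega⟩

lemma clt_le_cle : clt S m ≤ cle S m := by
  apply card_le_card
  intro r hr
  simp only [mem_filter] at hr ⊢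
  exact ⟨hr.1, by omega⟩

lemma cle_le_clt (h : a < b) : cle S a ≤ clt S b := by
  apply card_le_card
  intro r hr
  simp only [mem_filter] at hr ⊢
  exact ⟨hr.1, by omega⟩

lemma cle_eq (h : a ∈ S) : cle S a = clt S a + 1 := by
  unfold cle clt
  have : S.filter (fun r => r ≤ a) = insert a (S.filter (fun r => r < a)) := by
    ext r
    simp only [mem_filter, mem_insert]
    constructor
    · rintro ⟨hr, hra⟩
      rcases eq_or_lt_of_le hra with h' | h'
      · exact Or.inl h'
      · exact Or.inr ⟨hr, h'⟩
    · rintro (rfl | ⟨hr, hra⟩)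
      · exact ⟨h, le_refl _⟩
      · exact ⟨hr, by omega⟩
  rw [this, card_insert_of_notMem (by simp)]

lemma clt_succ : clt S (a + 1) = cle S a := by
  unfold cle clt
  congr 1
  ext r
  simp only [mem_filter]
  constructor <;> rintro ⟨h1, h2⟩ <;> exact ⟨h1, by omega⟩

lemma clt_split (h : a ≤ b) :
    clt S b = clt S a + (S.filter (fun r => a ≤ r ∧ r < b)).card := by
  unfold clt
  rw [← card_union_of_disjoint]
  · congr 1
    ext r
    simp only [mem_union, mem_filter]
    constructor
    · rintro ⟨hr, hrb⟩
      by_cases hra : r < a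
      · exact Or.inl ⟨hr, hra⟩
      · exact Or.inr ⟨hr, by omega, hrb⟩
    · rintro (⟨hr, hra⟩ | ⟨hr, _, hrb⟩) <;> exact ⟨hr, by omega⟩
  · simp only [disjoint_left, mem_filter]
    rintro r ⟨_, hra⟩ ⟨_, hab, _⟩
    omega

lemma clt_le_add (h : a ≤ b) : clt S b ≤ clt S a + (b - a) := by
  rw [clt_split (S := S) h]
  have : (S.filter (fun r => a ≤ r ∧ r < b)).card ≤ (Finset.Ico a b).card := by
    apply card_le_card
    intro r hr
    simp only [mem_filter] at hr
    simp [mem_Ico]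
    omega
  simp [Nat.card_Ico] at this
  omega

lemma clt_add_lt (h : a < b) (ha : a ∉ S) : clt S b + a < clt S a + b := by
  rw [clt_split (S := S) (le_of_lt h)]
  have : (S.filter (fun r => a ≤ r ∧ r < b)).card ≤ (Finset.Ico (a + 1) b).card := by
    apply card_le_card
    intro r hr
    simp only [mem_filter] at hr
    have : r ≠ a := by rintro rfl; exact ha hr.1
    simp [mem_Ico]
    omega
  simp [Nat.card_Ico] at this
  omega

lemma clt_add_lt' (h : a < b) (hadj : ∀ r ∈ S, r + 1 ≠ b) : clt S b + a < clt S a + b := by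
  rw [clt_split (S := S) (le_of_lt h)]
  have : (S.filter (fun r => a ≤ r ∧ r < b)).card ≤ (Finset.Ico a (b - 1)).card := by
    apply card_le_card
    intro r hr
    simp only [mem_filter] at hr
    have := hadj r hr.1
    simp [mem_Ico]
    omega
  simp [Nat.card_Ico] at this
  omega

lemma clt_eq_interval (h : a < b) (heq : clt S b = clt S a + (b - a)) :
    a ∈ S ∧ (a + 2 ≤ b → a + 1 ∈ S) := by
  have hsplit := clt_split (S := S) (le_of_lt h)
  have hcard : (Finset.Ico a b).card ≤ (S.filter (fun r => a ≤ r ∧ r < b)).card := by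
    simp [Nat.card_Ico]; omega
  have hsub : S.filter (fun r => a ≤ r ∧ r < b) ⊆ Finset.Ico a b := by
    intro r hr
    simp only [mem_filter] at hr
    simp [mem_Ico]
    omega
  have hEq : S.filter (fun r => a ≤ r ∧ r < b) = Finset.Ico a b :=
    eq_of_subset_of_card_le hsub hcard
  constructor
  · have : a ∈ Finset.Ico a b := by simp [mem_Ico]; omega
    rw [← hEq] at this
    exact (mem_filter.mp this).1
  · intro h2
    have : a + 1 ∈ Finset.Ico a b := by simp [mem_Ico]; omega
    rw [← hEq] at this
    exact (mem_filter.mp this).1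





lemma mem_rends {M : Finset (ℕ × ℕ)} {p : ℕ × ℕ} (hp : p ∈ M) : p.2 ∈ rends M :=
  mem_image_of_mem _ hp

lemma mem_RS {P : Finset (ℕ × ℕ)} {p q : ℕ × ℕ} (hp : p ∈ P) (hq : q ∈ P)
    (hq2 : q.1 < q.2) (hle : p.2 ≤ q.1) : p.2 ∈ RS P := by
  unfold RS
  exact mem_filter.mpr ⟨mem_rends hp, ⟨q.2, mem_rends hq, by omega⟩⟩

lemma mem_RS' {P : Finset (ℕ × ℕ)} {p q : ℕ × ℕ} (hp : p ∈ P) (hq : q ∈ P)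
    (hlt : p.2 < q.2) : p.2 ∈ RS P :=
  mem_filter.mpr ⟨mem_rends hp, ⟨q.2, mem_rends hq, hlt⟩⟩

lemma RS_card_add_one_le {M : Finset (ℕ × ℕ)} (hM : M.Nonempty) :
    (RS M).card + 1 ≤ M.card := by
  have hne : (rends M).Nonempty := hM.image _
  set m0 := (rends M).max' hne with hm0
  have hsub : RS M ⊆ (rends M).erase m0 := by
    intro r hr
    simp only [RS, mem_filter] at hr
    obtain ⟨hr1, s, hs, hlt⟩ := hr
    exact mem_erase.mpr ⟨by have := le_max' _ s hs; omega, hr1⟩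
  have h1 := card_le_card hsub
  rw [card_erase_of_mem (max'_mem _ _)] at h1
  have h2 : (rends M).card ≤ M.card := card_image_le
  have h3 : 0 < (rends M).card := card_pos.mpr hne
  omega

variable {S : Finset ℕ} {a b r i : ℕ}

lemma G_succ_le_F (hr : r ∈ S) (hri : r ≤ i) :
    r + clt S r + 1 ≤ i + cle S i := by
  have h1 := cle_eq hr
  have h2 := cle_mono (S := S) hri
  omega

/-- well-definedness and statistic preservation of `Phi`. -/
lemma phi_spec {n k : ℕ} {P : Finset (ℕ × ℕ)} (hP : P ∈ CTSet n k) :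
    Phi P ∈ PMSet (n + k - 1) k ∧ numNA (Phi P) = numTrans P := by
  obtain ⟨⟨hB, hd⟩, hk, hRC⟩ := hP
  set e : ℕ × ℕ → ℕ × ℕ :=
    fun p => (p.1 + cle (RS P) p.1, p.2 + clt (RS P) p.2) with he
  have hPhi : Phi P = P.image e := rfl
  have hinj : Set.InjOn e ↑P := by
    intro p hp q hq hpq
    simp only [he, Prod.mk.injEq] at hpq
    have h1 : p.1 = q.1 := by
      rcases Nat.lt_trichotomy p.1 q.1 with h | h | h
      · have := cle_mono (S := RS P) (le_of_lt h); omega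
      · exact h
      · have := cle_mono (S := RS P) (le_of_lt h); omega
    have h2 : p.2 = q.2 := by
      rcases Nat.lt_trichotomy p.2 q.2 with h | h | h
      · have := clt_mono (S := RS P) (le_of_lt h); omega
      · exact h
      · have := clt_mono (S := RS P) (le_of_lt h); omega
    exact Prod.ext h1 h2
  -- basic order facts
  have hFG : ∀ {a b : ℕ}, a < b → a + cle (RS P) a < b + clt (RS P) b := by
    intro a b h
    have := cle_le_clt (S := RS P) h
    omega
  constructor
  · refine ⟨⟨?_, ?_⟩, ?_, ?_, ?_⟩
    · -- bounds
      rintro p' hp'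
      obtain ⟨p, hp, rfl⟩ := mem_image.mp hp'
      obtain ⟨hb1, hb2, hb3⟩ := hB p hp
      refine ⟨by simp [he]; omega, hFG hb2, ?_⟩
      have hc : clt (RS P) p.2 ≤ (RS P).card := card_filter_le _ _
      have hkk := RS_card_add_one_le ⟨p, hp⟩
      simp only [he]
      omega
    · -- distinctness
      rintro p' hp' q' hq' hne
      obtain ⟨p, hp, rfl⟩ := mem_image.mp hp'
      obtain ⟨q, hq, rfl⟩ := mem_image.mp hq'
      have hpq : p ≠ q := by rintro rfl; exact hne rfl
      obtain ⟨hd1, hd2⟩ := hd p hp q hq hpq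
      have key : ∀ a ∈ P, ∀ b ∈ P, (e a).1 ≠ (e b).2 := by
        intro a ha b hb
        rcases Nat.lt_trichotomy a.1 b.2 with h | h | h
        · have := hFG h; simp only [he]; omega
        · have hRS : b.2 ∈ RS P := mem_RS hb ha (hB a ha).2.1 h.ge
          have := cle_eq hRS
          simp only [he]; rw [h]; omega
        · have hRS : b.2 ∈ RS P := mem_RS hb ha (hB a ha).2.1 (le_of_lt h)
          have := G_succ_le_F hRS (le_of_lt h)
          simp only [he]; omega
      refine ⟨?_, key p hp q hq, (key q hq p hp).symm, ?_⟩
      · have : p.1 ≠ q.1 := hd1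
        rcases Nat.lt_trichotomy p.1 q.1 with h | h | h
        · have := cle_mono (S := RS P) (le_of_lt h); simp only [he]; omega
        · exact absurd h this
        · have := cle_mono (S := RS P) (le_of_lt h); simp only [he]; omega
      · rcases Nat.lt_trichotomy p.2 q.2 with h | h | h
        · have := clt_mono (S := RS P) (le_of_lt h); simp only [he]; omega
        · exact absurd h hd2
        · have := clt_mono (S := RS P) (le_of_lt h); simp only [he]; omega
    · -- cardinality
      rw [hPhi, card_image_of_injOn hinj, hk]
    · -- no 2-right crossing
      rintro ⟨p', hp', q', hq', h1, h2, h3, h4⟩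
      obtain ⟨p, hp, rfl⟩ := mem_image.mp hp'
      obtain ⟨q, hq, rfl⟩ := mem_image.mp hq'
      simp only [he] at h1 h2 h3 h4
      have hp1q1 : p.1 < q.1 := by
        by_contra h
        push_neg at h
        have := cle_mono (S := RS P) h
        omega
      have hq1p2 : q.1 < p.2 := by
        by_contra h
        push_neg at h
        have hRS : p.2 ∈ RS P := mem_RS hp hq (hB q hq).2.1 h
        have := G_succ_le_F hRS h
        omega
      have hp2q2 : p.2 < q.2 := by
        by_contra h
        push_neg at h
        have := clt_mono (S := RS P) h
        omega
      have hRS : p.2 ∈ RS P := mem_RS' hp hq hp2q2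
      have h5 := cle_le_clt (S := RS P) hp2q2
      have h6 := cle_eq hRS
      exact hRC ⟨p, hp, q, hq, hp1q1, hq1p2, hp2q2, by omega⟩
    · -- no right nesting
      rintro ⟨p', hp', q', hq', h1, h2, h3, h4⟩
      obtain ⟨p, hp, rfl⟩ := mem_image.mp hp'
      obtain ⟨q, hq, rfl⟩ := mem_image.mp hq'
      simp only [he] at h1 h2 h3 h4
      have hq2p2 : q.2 < p.2 := by
        by_contra h
        push_neg at h
        have := clt_mono (S := RS P) h
        omega
      have hRS : q.2 ∈ RS P := mem_RS' hq hp hq2p2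
      have h5 := cle_le_clt (S := RS P) hq2p2
      have h6 := cle_eq hRS
      omega
  · -- statistic
    have stepA : numTrans P =
        ((P ×ˢ P).filter (fun pq => pq.2.1 = pq.1.2)).card := by
      unfold numTrans
      symm
      apply Finset.card_bij (fun pq _ => pq.1.2)
      · rintro ⟨p, q⟩ hpq
        simp only [mem_filter, mem_product] at hpq
        obtain ⟨⟨hp, hq⟩, hc⟩ := hpq
        exact mem_inter.mpr ⟨mem_image_of_mem _ hp, mem_image.mpr ⟨q, hq, hc⟩⟩
      · rintro ⟨p, q⟩ hpq ⟨p2, q2⟩ hpq2 hv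
        simp only [mem_filter, mem_product] at hpq hpq2
        simp only at hv
        have h1 : p = p2 := by
          by_contra hne
          exact (hd p hpq.1.1 p2 hpq2.1.1 hne).2 hv
        have h2 : q = q2 := by
          by_contra hne
          apply (hd q hpq.1.2 q2 hpq2.1.2 hne).1
          rw [hpq.2, hpq2.2, hv]
        rw [h1, h2]
      · intro v hv
        obtain ⟨hv1, hv2⟩ := mem_inter.mp hv
        obtain ⟨a, ha, ha2⟩ := mem_image.mp hv1
        obtain ⟨b, hb, hb1⟩ := mem_image.mp hv2
        exact ⟨(a, b), mem_filter.mpr ⟨mem_product.mpr ⟨ha, hb⟩, by exact hb1.trans ha2.symm⟩, ha2⟩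
    have stepB : numNA (Phi P) =
        ((P ×ˢ P).filter (fun pq => pq.2.1 = pq.1.2)).card := by
      unfold numNA
      symm
      apply Finset.card_bij (fun pq _ => (e pq.1, e pq.2))
      · rintro ⟨p, q⟩ hpq
        simp only [mem_filter, mem_product] at hpq
        obtain ⟨⟨hp, hq⟩, hc⟩ := hpq
        have hRS : p.2 ∈ RS P := by
          apply mem_RS' hp hq
          have := (hB q hq).2.1
          omega
        refine mem_filter.mpr ⟨mem_product.mpr ⟨mem_image_of_mem _ hp, mem_image_of_mem _ hq⟩, ?_⟩
        have := cle_eq hRS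
        simp only [he, hc]
        omega
      · rintro ⟨p, q⟩ hpq ⟨p2, q2⟩ hpq2 hv
        simp only [mem_filter, mem_product] at hpq hpq2
        simp only [Prod.mk.injEq] at hv
        rw [hinj hpq.1.1 hpq2.1.1 hv.1, hinj hpq.1.2 hpq2.1.2 hv.2]
      · rintro ⟨u, w⟩ huw
        simp only [mem_filter, mem_product] at huw
        obtain ⟨⟨hu, hw⟩, hc⟩ := huw
        obtain ⟨p, hp, rfl⟩ := mem_image.mp hu
        obtain ⟨q, hq, rfl⟩ := mem_image.mp hw
        simp only [he] at hc
        have hq1p2 : q.1 = p.2 := by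
          rcases Nat.lt_trichotomy q.1 p.2 with h | h | h
          · have := hFG h; omega
          · exact h
          · have hRS : p.2 ∈ RS P := mem_RS hp hq (hB q hq).2.1 (le_of_lt h)
            have h6 := cle_eq hRS
            have h7 := cle_mono (S := RS P) (Nat.succ_le_of_lt h)
            have h8 := G_succ_le_F hRS (le_of_lt h)
            have h9 : p.2 + clt (RS P) p.2 + 2 ≤ q.1 + cle (RS P) q.1 := by
              have := cle_mono (S := RS P) (le_of_lt h)
              omega
            omega
        exact ⟨(p, q), mem_filter.mpr ⟨mem_product.mpr ⟨hp, hq⟩, hq1p2⟩, rfl⟩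
    rw [stepA, stepB]





lemma clt_lt_self {S : Finset ℕ} {m : ℕ} (h1 : ∀ r ∈ S, 1 ≤ r) (hm : 1 ≤ m) :
    clt S m < m := by
  unfold clt
  have hs : S.filter (fun r => r < m) ⊆ Finset.Ico 1 m := by
    intro r hr
    simp only [mem_filter] at hr
    exact mem_Ico.mpr ⟨h1 r hr.1, hr.2⟩
  have := card_le_card hs
  simp [Nat.card_Ico] at this
  omega

lemma rights_nonadj {m k : ℕ} {M : Finset (ℕ × ℕ)} (hM : M ∈ PMSet m k) :
    ∀ r ∈ rends M, ∀ s ∈ rends M, s ≠ r + 1 := by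
  obtain ⟨⟨hB, hd⟩, hk, h2, hN⟩ := hM
  intro r hr s hs he
  obtain ⟨p, hp, rfl⟩ := mem_image.mp hr
  obtain ⟨q, hq, rfl⟩ := mem_image.mp hs
  have hpq : p ≠ q := by rintro rfl; omega
  have hdd := hd p hp q hq hpq
  have hbp := hB p hp
  have hbq := hB q hq
  rcases Nat.lt_trichotomy p.1 q.1 with h | h | h
  · have hne : p.2 ≠ q.1 := hdd.2.2.1
    rcases Nat.lt_or_ge q.1 p.2 with h' | h'
    · exact h2 ⟨p, hp, q, hq, h, h', by omega, by omega⟩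
    · omega
  · exact hdd.1 h
  · exact hN ⟨q, hq, p, hp, h, hbp.2.1, by omega, by omega⟩

lemma left_not_rend {m k : ℕ} {M : Finset (ℕ × ℕ)} (hM : M ∈ PMSet m k) :
    ∀ p ∈ M, p.1 ∉ rends M := by
  obtain ⟨⟨hB, hd⟩, -, -, -⟩ := hM
  intro p hp hmem
  obtain ⟨q, hq, he⟩ := mem_image.mp hmem
  by_cases h : p = q
  · subst h
    have := hB p hp
    omega
  · have := hd q hq p hp (fun hh => h hh.symm)
    exact this.2.2.1 he

/-- generic: number of transients equals number of (r-end, l-start) incidences. -/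
lemma trans_eq_pairs {Q : Finset (ℕ × ℕ)}
    (hd : ∀ p ∈ Q, ∀ q ∈ Q, p ≠ q → p.1 ≠ q.1 ∧ p.2 ≠ q.2) :
    numTrans Q = ((Q ×ˢ Q).filter (fun pq => pq.2.1 = pq.1.2)).card := by
  unfold numTrans
  symm
  apply Finset.card_bij (fun pq _ => pq.1.2)
  · rintro ⟨p, q⟩ hpq
    simp only [mem_filter, mem_product] at hpq
    obtain ⟨⟨hp, hq⟩, hc⟩ := hpq
    exact mem_inter.mpr ⟨mem_image_of_mem _ hp, mem_image.mpr ⟨q, hq, hc⟩⟩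
  · rintro ⟨p, q⟩ hpq ⟨p2, q2⟩ hpq2 hv
    simp only [mem_filter, mem_product] at hpq hpq2
    simp only at hv
    have h1 : p = p2 := by
      by_contra hne
      exact (hd p hpq.1.1 p2 hpq2.1.1 hne).2 hv
    have h2 : q = q2 := by
      by_contra hne
      apply (hd q hpq.1.2 q2 hpq2.1.2 hne).1
      rw [hpq.2, hpq2.2, hv]
    rw [h1, h2]
  · intro v hv
    obtain ⟨hv1, hv2⟩ := mem_inter.mp hv
    obtain ⟨a, ha, ha2⟩ := mem_image.mp hv1
    obtain ⟨b, hb, hb1⟩ := mem_image.mp hv2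
    exact ⟨(a, b), mem_filter.mpr ⟨mem_product.mpr ⟨ha, hb⟩,
      by exact hb1.trans ha2.symm⟩, ha2⟩

/-- well-definedness and statistic preservation of `Psi`. -/
lemma psi_spec {n k : ℕ} {M : Finset (ℕ × ℕ)} (hM : M ∈ PMSet (n + k - 1) k) :
    Psi M ∈ CTSet n k ∧ numTrans (Psi M) = numNA M := by
  have hNAdj := rights_nonadj hM
  have hLnotR := left_not_rend hM
  obtain ⟨⟨hB, hd⟩, hk, hno2, hnoN⟩ := hM
  have hsubRS : RS M ⊆ rends M := RS_subset M
  have h1rends : ∀ r ∈ rends M, 1 ≤ r := by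
    intro r hr
    obtain ⟨p, hp, rfl⟩ := mem_image.mp hr
    have := hB p hp
    omega
  have hDlt : ∀ m : ℕ, 1 ≤ m → clt (RS M) m < m :=
    fun m hm => clt_lt_self (fun r hr => h1rends r (hsubRS hr)) hm
  -- strict monotonicity on right endpoints
  have hgR : ∀ a ∈ rends M, ∀ b ∈ rends M, a < b → clt (RS M) b + a < clt (RS M) a + b := by
    intro a ha b hb hab
    apply clt_add_lt' hab
    intro r hr he
    exact hNAdj r (hsubRS hr) b hb he.symm
  -- strict monotonicity from a left endpoint (or any non-right-endpoint)
  have hgL : ∀ a b : ℕ, a ∉ rends M → a < b → clt (RS M) b + a < clt (RS M) a + b := by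
    intro a b ha hab
    exact clt_add_lt hab (fun h => ha (hsubRS h))
  -- snd is injective on M
  have hsndinj : ∀ p ∈ M, ∀ q ∈ M, p.2 = q.2 → p = q := by
    intro p hp q hq he
    by_contra hne
    exact (hd p hp q hq hne).2.2.2 he
  have hfstinj : ∀ p ∈ M, ∀ q ∈ M, p.1 = q.1 → p = q := by
    intro p hp q hq he
    by_contra hne
    exact (hd p hp q hq hne).1 he
  set e : ℕ × ℕ → ℕ × ℕ := fun p => (p.1 - clt (RS M) p.1, p.2 - clt (RS M) p.2) with he
  have hPsi : Psi M = M.image e := rfl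
  -- main bound: right endpoints map into [1, n]
  have hub : ∀ p ∈ M, p.2 - clt (RS M) p.2 ≤ n := by
    intro p hp
    have hne : (rends M).Nonempty := ⟨p.2, mem_rends hp⟩
    set m0 := (rends M).max' hne with hm0def
    have hm0 : m0 ∈ rends M := max'_mem _ _
    have hble : p.2 ≤ m0 := le_max' _ _ (mem_rends hp)
    have hm0b : m0 ≤ n + k - 1 := by
      obtain ⟨q, hq, hqe⟩ := mem_image.mp hm0
      have := hB q hq
      omega
    have hcard_r : (rends M).card = k := by
      rw [← hk]
      apply card_image_of_injOn
      intro a ha b hb hab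
      exact hsndinj a ha b hb hab
    have hRSeq : RS M = (rends M).erase m0 := by
      ext r
      simp only [RS, mem_filter, mem_erase]
      constructor
      · rintro ⟨hr, s, hs, hlt⟩
        have := le_max' _ s hs
        exact ⟨by omega, hr⟩
      · rintro ⟨hne', hr⟩
        have := le_max' _ r hr
        exact ⟨hr, m0, hm0, by omega⟩
    have hcRS : (RS M).card + 1 = k := by
      rw [hRSeq, card_erase_of_mem hm0]
      have : 0 < (rends M).card := card_pos.mpr ⟨m0, hm0⟩
      omega
    have hDm0 : clt (RS M) m0 = (RS M).card := by
      unfold clt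
      congr 1
      apply filter_true_of_mem
      intro r hr
      simp only [RS, mem_filter] at hr
      obtain ⟨hr1, s, hs, hlt⟩ := hr
      have := le_max' _ s hs
      omega
    have hk1 : 1 ≤ k := by
      rw [← hk]
      exact card_pos.mpr ⟨p, hp⟩
    rcases eq_or_lt_of_le hble with h | h
    · rw [h]
      omega
    · have := hgR p.2 (mem_rends hp) m0 hm0 h
      have h1 := hDlt p.2 (h1rends _ (mem_rends hp))
      have h2 := hDlt m0 (h1rends _ hm0)
      omega
  have hDiag : IsPartitionDiagram n (Psi M) := by
    constructor
    · rintro p' hp'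
      obtain ⟨p, hp, rfl⟩ := mem_image.mp hp'
      obtain ⟨hb1, hb2, hb3⟩ := hB p hp
      have h1 := hDlt p.1 hb1
      have h2 := hDlt p.2 (by omega)
      have h3 := hgL p.1 p.2 (hLnotR p hp) hb2
      exact ⟨by simp only [he]; omega, by simp only [he]; omega, hub p hp⟩
    · rintro p' hp' q' hq' hne
      obtain ⟨p, hp, rfl⟩ := mem_image.mp hp'
      obtain ⟨q, hq, rfl⟩ := mem_image.mp hq'
      have hpq : p ≠ q := by rintro rfl; exact hne rfl
      obtain ⟨hd1, hd2, hd3, hd4⟩ := hd p hp q hq hpq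
      have hbp := hB p hp
      have hbq := hB q hq
      constructor
      · rcases Nat.lt_trichotomy p.1 q.1 with h | h | h
        · have := hgL p.1 q.1 (hLnotR p hp) h
          have h1 := hDlt p.1 (by omega)
          have h2 := hDlt q.1 (by omega)
          simp only [he]; omega
        · exact absurd h hd1
        · have := hgL q.1 p.1 (hLnotR q hq) h
          have h1 := hDlt p.1 (by omega)
          have h2 := hDlt q.1 (by omega)
          simp only [he]; omega
      · rcases Nat.lt_trichotomy p.2 q.2 with h | h | h
        · have := hgR p.2 (mem_rends hp) q.2 (mem_rends hq) h
          have h1 := hDlt p.2 (by omega)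
          have h2 := hDlt q.2 (by omega)
          simp only [he]; omega
        · exact absurd h hd4
        · have := hgR q.2 (mem_rends hq) p.2 (mem_rends hp) h
          have h1 := hDlt p.2 (by omega)
          have h2 := hDlt q.2 (by omega)
          simp only [he]; omega
  have hinj : Set.InjOn e ↑M := by
    intro p hp q hq hpq
    simp only [he, Prod.mk.injEq] at hpq
    have hbp := hB p hp
    have hbq := hB q hq
    have h1 := hDlt p.2 (by omega)
    have h2 := hDlt q.2 (by omega)
    have h22 : p.2 = q.2 := by
      rcases Nat.lt_trichotomy p.2 q.2 with h | h | h
      · have := hgR p.2 (mem_rends hp) q.2 (mem_rends hq) h; omega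
      · exact h
      · have := hgR q.2 (mem_rends hq) p.2 (mem_rends hp) h; omega
    exact hsndinj p hp q hq h22
  refine ⟨⟨hDiag, ?_, ?_⟩, ?_⟩
  · rw [hPsi, card_image_of_injOn hinj, hk]
  · -- no right crossing
    rintro ⟨p', hp', q', hq', h1, h2, h3, h4⟩
    obtain ⟨p, hp, rfl⟩ := mem_image.mp hp'
    obtain ⟨q, hq, rfl⟩ := mem_image.mp hq'
    simp only [he] at h1 h2 h3 h4
    have hbp := hB p hp
    have hbq := hB q hq
    have hD1 := hDlt p.1 (by omega)
    have hD2 := hDlt p.2 (by omega)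
    have hD3 := hDlt q.1 (by omega)
    have hD4 := hDlt q.2 (by omega)
    have hp1q1 : p.1 < q.1 := by
      rcases Nat.lt_trichotomy p.1 q.1 with h | h | h
      · exact h
      · rw [h] at h1; omega
      · have := hgL q.1 p.1 (hLnotR q hq) h; omega
    have hpq : p ≠ q := by rintro rfl; omega
    have hq1p2 : q.1 < p.2 := by
      rcases Nat.lt_trichotomy q.1 p.2 with h | h | h
      · exact h
      · exact absurd h.symm (hd p hp q hq hpq).2.2.1
      · have := clt_le_add (S := RS M) (le_of_lt h)
        omega
    have hp2q2 : p.2 < q.2 := by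
      rcases Nat.lt_trichotomy p.2 q.2 with h | h | h
      · exact h
      · rw [h] at h3; omega
      · have := hgR q.2 (mem_rends hq) p.2 (mem_rends hp) h; omega
    -- h4 : q.2 - clt (RS M) q.2 = p.2 - clt (RS M) p.2 + 1
    have hsplit := clt_split (S := RS M) (le_of_lt hp2q2)
    have hmid : ((RS M).filter (fun r => p.2 ≤ r ∧ r < q.2)).card = q.2 - p.2 - 1 := by
      omega
    rcases Nat.lt_or_ge q.2 (p.2 + 3) with hcase | hcase
    · -- q.2 ≤ p.2 + 2
      rcases eq_or_lt_of_le (Nat.succ_le_of_lt hp2q2) with h | h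
      · exact hNAdj p.2 (mem_rends hp) q.2 (mem_rends hq) h.symm
      · exact hno2 ⟨p, hp, q, hq, hp1q1, hq1p2, hp2q2, by omega⟩
    · -- q.2 ≥ p.2 + 3 : interval forcing, adjacent right ends
      have hsub2 : (RS M).filter (fun r => p.2 ≤ r ∧ r < q.2) ⊆ Finset.Ico p.2 (q.2 - 1) := by
        intro r hr
        simp only [mem_filter] at hr
        have := hNAdj r (hsubRS hr.1) q.2 (mem_rends hq)
        simp only [mem_Ico]
        omega
      have hcard2 : (Finset.Ico p.2 (q.2 - 1)).card ≤
          ((RS M).filter (fun r => p.2 ≤ r ∧ r < q.2)).card := by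
        simp [Nat.card_Ico]
        omega
      have hEq := eq_of_subset_of_card_le hsub2 hcard2
      have hmem : p.2 + 1 ∈ Finset.Ico p.2 (q.2 - 1) := by
        simp [mem_Ico]; omega
      rw [← hEq] at hmem
      have : p.2 + 1 ∈ rends M := hsubRS (mem_filter.mp hmem).1
      exact hNAdj p.2 (mem_rends hp) (p.2 + 1) this rfl
  · -- statistic
    have stepA := trans_eq_pairs hDiag.2
    rw [stepA]
    unfold numNA
    symm
    apply Finset.card_bij (fun pq _ => (e pq.1, e pq.2))
    · rintro ⟨p, q⟩ hpq
      simp only [mem_filter, mem_product] at hpq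
      obtain ⟨⟨hp, hq⟩, hc⟩ := hpq
      have hbp := hB p hp
      have hbq := hB q hq
      have hpRS : p.2 ∈ RS M := mem_RS' hp hq (by omega)
      refine mem_filter.mpr ⟨mem_product.mpr
        ⟨mem_image_of_mem _ hp, mem_image_of_mem _ hq⟩, ?_⟩
      have hsucc : clt (RS M) (p.2 + 1) = clt (RS M) p.2 + 1 := by
        rw [clt_succ, cle_eq hpRS]
      have hD := hDlt p.2 (by omega)
      simp only [he, hc, hsucc]
      omega
    · rintro ⟨p, q⟩ hpq ⟨p2, q2⟩ hpq2 hv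
      simp only [mem_filter, mem_product] at hpq hpq2
      simp only [Prod.mk.injEq] at hv
      rw [hinj hpq.1.1 hpq2.1.1 hv.1, hinj hpq.1.2 hpq2.1.2 hv.2]
    · rintro ⟨u, w⟩ huw
      simp only [mem_filter, mem_product] at huw
      obtain ⟨⟨hu, hw⟩, hc⟩ := huw
      obtain ⟨p, hp, rfl⟩ := mem_image.mp hu
      obtain ⟨q, hq, rfl⟩ := mem_image.mp hw
      simp only [he] at hc
      have hbp := hB p hp
      have hbq := hB q hq
      have hD1 := hDlt q.1 (by omega)
      have hD2 := hDlt p.2 (by omega)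
      have hq1 : q.1 = p.2 + 1 := by
        rcases Nat.lt_trichotomy q.1 p.2 with h | h | h
        · have := hgL q.1 p.2 (hLnotR q hq) h; omega
        · exfalso
          have hpq : p ≠ q := by rintro rfl; omega
          exact (hd p hp q hq hpq).2.2.1 h.symm
        · -- p.2 < q.1 with equal images
          have heq : clt (RS M) q.1 = clt (RS M) p.2 + (q.1 - p.2) := by omega
          obtain ⟨hmem1, hmem2⟩ := clt_eq_interval (S := RS M) h heq
          rcases Nat.lt_or_ge q.1 (p.2 + 2) with hcc | hcc
          · omega
          · exfalso
            have := hmem2 hcc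
            exact hNAdj p.2 (hsubRS hmem1) (p.2 + 1) (hsubRS this) rfl
      exact ⟨(p, q), mem_filter.mpr ⟨mem_product.mpr ⟨hp, hq⟩, hq1⟩, rfl⟩





lemma psi_phi (P : Finset (ℕ × ℕ)) : Psi (Phi P) = P := by
  have hrends : rends (Phi P) = (rends P).image (fun v => v + clt (RS P) v) := by
    unfold rends Phi
    rw [image_image, image_image]
    rfl
  have hGmono : ∀ a b : ℕ, a ≤ b → a + clt (RS P) a ≤ b + clt (RS P) b := by
    intro a b h
    have := clt_mono (S := RS P) h
    omega
  have hGs : ∀ a b : ℕ, a < b → a + clt (RS P) a < b + clt (RS P) b := by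
    intro a b h
    have := clt_mono (S := RS P) (le_of_lt h)
    omega
  have hRS : RS (Phi P) = (RS P).image (fun v => v + clt (RS P) v) := by
    unfold RS
    rw [hrends]
    ext v
    simp only [mem_filter, mem_image]
    constructor
    · rintro ⟨⟨r, hr, rfl⟩, s', ⟨s, hs, rfl⟩, hlt⟩
      refine ⟨r, ⟨hr, s, hs, ?_⟩, rfl⟩
      by_contra h
      push_neg at h
      exact absurd hlt (not_lt.mpr (hGmono s r h))
    · rintro ⟨r, ⟨hr1, s, hs, hrs⟩, rfl⟩
      exact ⟨⟨r, hr1, rfl⟩, s + clt (RS P) s, ⟨s, hs, rfl⟩, hGs r s hrs⟩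
  have hGinj : Set.InjOn (fun v => v + clt (RS P) v) ↑(RS P) := by
    intro a _ b _ h
    simp only at h
    rcases Nat.lt_trichotomy a b with h' | h' | h'
    · have := hGs a b h'; omega
    · exact h'
    · have := hGs b a h'; omega
  have h1 : ∀ i, clt (RS (Phi P)) (i + cle (RS P) i) = cle (RS P) i := by
    intro i
    show ((RS (Phi P)).filter (fun v => v < i + cle (RS P) i)).card = cle (RS P) i
    rw [hRS]
    have hfe : (((RS P).image (fun v => v + clt (RS P) v)).filter
          (fun v => v < i + cle (RS P) i))
        = ((RS P).filter (fun r => r ≤ i)).image (fun v => v + clt (RS P) v) := by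
      ext v
      simp only [mem_filter, mem_image]
      constructor
      · rintro ⟨⟨r, hr, rfl⟩, hv⟩
        refine ⟨r, ⟨hr, ?_⟩, rfl⟩
        by_contra h
        push_neg at h
        have := cle_le_clt (S := RS P) h
        omega
      · rintro ⟨r, ⟨hr, hri⟩, rfl⟩
        refine ⟨⟨r, hr, rfl⟩, ?_⟩
        have := G_succ_le_F hr hri
        omega
    rw [hfe, card_image_of_injOn (hGinj.mono (by exact_mod_cast filter_subset _ _))]
    rfl
  have h2 : ∀ j, clt (RS (Phi P)) (j + clt (RS P) j) = clt (RS P) j := by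
    intro j
    show ((RS (Phi P)).filter (fun v => v < j + clt (RS P) j)).card = clt (RS P) j
    rw [hRS]
    have hfe : (((RS P).image (fun v => v + clt (RS P) v)).filter
          (fun v => v < j + clt (RS P) j))
        = ((RS P).filter (fun r => r < j)).image (fun v => v + clt (RS P) v) := by
      ext v
      simp only [mem_filter, mem_image]
      constructor
      · rintro ⟨⟨r, hr, rfl⟩, hv⟩
        refine ⟨r, ⟨hr, ?_⟩, rfl⟩
        by_contra h
        push_neg at h
        exact absurd hv (not_lt.mpr (hGmono j r h))
      · rintro ⟨r, ⟨hr, hri⟩, rfl⟩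
        exact ⟨⟨r, hr, rfl⟩, hGs r j hri⟩
    rw [hfe, card_image_of_injOn (hGinj.mono (by exact_mod_cast filter_subset _ _))]
    rfl
  show ((P.image (fun p : ℕ × ℕ => (p.1 + cle (RS P) p.1, p.2 + clt (RS P) p.2))).image
      (fun p : ℕ × ℕ => (p.1 - clt (RS (Phi P)) p.1, p.2 - clt (RS (Phi P)) p.2))) = P
  rw [Finset.image_image]
  refine (Finset.image_congr ?_).trans Finset.image_id
  intro p hp
  simp only [Function.comp_apply, h1, h2, id_eq, Nat.add_sub_cancel]



lemma phi_psi {m k : ℕ} {M : Finset (ℕ × ℕ)} (hM : M ∈ PMSet m k) :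
    Phi (Psi M) = M := by
  have hNAdj := rights_nonadj hM
  have hLnotR := left_not_rend hM
  obtain ⟨⟨hB, hd⟩, hk, -, -⟩ := hM
  have hsubRS : RS M ⊆ rends M := RS_subset M
  have h1rends : ∀ r ∈ rends M, 1 ≤ r := by
    intro r hr
    obtain ⟨p, hp, rfl⟩ := mem_image.mp hr
    have := hB p hp
    omega
  have hDlt : ∀ m' : ℕ, 1 ≤ m' → clt (RS M) m' < m' :=
    fun m' hm' => clt_lt_self (fun r hr => h1rends r (hsubRS hr)) hm'
  have hgR : ∀ a ∈ rends M, ∀ b ∈ rends M, a < b →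
      clt (RS M) b + a < clt (RS M) a + b := by
    intro a ha b hb hab
    apply clt_add_lt' hab
    intro r hr he
    exact hNAdj r (hsubRS hr) b hb he.symm
  have hgL : ∀ a b : ℕ, a ∉ rends M → a < b →
      clt (RS M) b + a < clt (RS M) a + b := by
    intro a b ha hab
    exact clt_add_lt hab (fun h => ha (hsubRS h))
  have hrends : rends (Psi M) = (rends M).image (fun v => v - clt (RS M) v) := by
    unfold rends Psi
    rw [image_image, image_image]
    rfl
  have hmono : ∀ a b : ℕ, a ≤ b → a - clt (RS M) a ≤ b - clt (RS M) b := by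
    intro a b h
    have := clt_le_add (S := RS M) h
    omega
  have hstrictR : ∀ a ∈ rends M, ∀ b ∈ rends M, a < b →
      a - clt (RS M) a < b - clt (RS M) b := by
    intro a ha b hb h
    have := hgR a ha b hb h
    have := hDlt a (h1rends a ha)
    omega
  have hRS : RS (Psi M) = (RS M).image (fun v => v - clt (RS M) v) := by
    unfold RS
    rw [hrends]
    ext v
    simp only [mem_filter, mem_image]
    constructor
    · rintro ⟨⟨r, hr, rfl⟩, s', ⟨s, hs, rfl⟩, hlt⟩
      refine ⟨r, ⟨hr, s, hs, ?_⟩, rfl⟩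
      by_contra h
      push_neg at h
      exact absurd hlt (not_lt.mpr (hmono s r h))
    · rintro ⟨r, ⟨hr1, s, hs, hrs⟩, rfl⟩
      exact ⟨⟨r, hr1, rfl⟩, s - clt (RS M) s, ⟨s, hs, rfl⟩,
        hstrictR r hr1 s hs hrs⟩
  have hinjR : Set.InjOn (fun v => v - clt (RS M) v) ↑(RS M) := by
    intro a ha b hb h
    simp only at h
    simp only [Finset.mem_coe] at ha hb
    rcases Nat.lt_trichotomy a b with h' | h' | h'
    · have := hstrictR a (hsubRS ha) b (hsubRS hb) h'; omega
    · exact h'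
    · have := hstrictR b (hsubRS hb) a (hsubRS ha) h'; omega
  have h1 : ∀ i, i ∉ rends M → 1 ≤ i →
      cle (RS (Psi M)) (i - clt (RS M) i) = clt (RS M) i := by
    intro i hi hi1
    show ((RS (Psi M)).filter (fun v => v ≤ i - clt (RS M) i)).card = clt (RS M) i
    rw [hRS]
    have hfe : (((RS M).image (fun v => v - clt (RS M) v)).filter
          (fun v => v ≤ i - clt (RS M) i))
        = ((RS M).filter (fun r => r < i)).image (fun v => v - clt (RS M) v) := by
      ext v
      simp only [mem_filter, mem_image]
      constructor
      · rintro ⟨⟨r, hr, rfl⟩, hv⟩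
        refine ⟨r, ⟨hr, ?_⟩, rfl⟩
        by_contra h
        push_neg at h
        have hne : i ≠ r := fun e => hi (by rw [e]; exact hsubRS hr)
        have hlt : i < r := by omega
        have h3 := hgL i r hi hlt
        have h4 := hDlt i hi1
        omega
      · rintro ⟨r, ⟨hr, hri⟩, rfl⟩
        exact ⟨⟨r, hr, rfl⟩, hmono r i (le_of_lt hri)⟩
    rw [hfe, card_image_of_injOn (hinjR.mono (by exact_mod_cast filter_subset _ _))]
    rfl
  have h2 : ∀ j ∈ rends M, clt (RS (Psi M)) (j - clt (RS M) j) = clt (RS M) j := by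
    intro j hj
    show ((RS (Psi M)).filter (fun v => v < j - clt (RS M) j)).card = clt (RS M) j
    rw [hRS]
    have hfe : (((RS M).image (fun v => v - clt (RS M) v)).filter
          (fun v => v < j - clt (RS M) j))
        = ((RS M).filter (fun r => r < j)).image (fun v => v - clt (RS M) v) := by
      ext v
      simp only [mem_filter, mem_image]
      constructor
      · rintro ⟨⟨r, hr, rfl⟩, hv⟩
        refine ⟨r, ⟨hr, ?_⟩, rfl⟩
        by_contra h
        push_neg at h
        exact absurd hv (not_lt.mpr (hmono j r h))
      · rintro ⟨r, ⟨hr, hri⟩, rfl⟩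
        exact ⟨⟨r, hr, rfl⟩, hstrictR r (hsubRS hr) j hj hri⟩
    rw [hfe, card_image_of_injOn (hinjR.mono (by exact_mod_cast filter_subset _ _))]
    rfl
  show ((M.image (fun p : ℕ × ℕ => (p.1 - clt (RS M) p.1, p.2 - clt (RS M) p.2))).image
      (fun p : ℕ × ℕ => (p.1 + cle (RS (Psi M)) p.1, p.2 + clt (RS (Psi M)) p.2))) = M
  rw [Finset.image_image]
  refine (Finset.image_congr ?_).trans Finset.image_id
  intro p hp
  have hbp := hB p hp
  have hL := h1 p.1 (hLnotR p hp) hbp.1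
  have hR := h2 p.2 (mem_rends hp)
  have d1 := hDlt p.1 hbp.1
  have d2 := hDlt p.2 (by omega)
  simp only [Function.comp_apply, hL, hR, id_eq]
  have e1 : p.1 - clt (RS M) p.1 + clt (RS M) p.1 = p.1 := by omega
  have e2 : p.2 - clt (RS M) p.2 + clt (RS M) p.2 = p.2 := by omega
  rw [e1, e2]

end S8

/-- The bijection between `P(n+k-1,k)` and `CT(n,k)` preserves statistics:
matchings with exactly `t` neighbor alignments correspond to partitions with
exactly `t` transients. -/
theorem stmt8 (n k t : ℕ) (hn : 1 ≤ n) (hk : k ≤ n - 1) :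
    {M | M ∈ PMSet (n + k - 1) k ∧ numNA M = t}.ncard =
    {P | P ∈ CTSet n k ∧ numTrans P = t}.ncard := by
  have himg : S8.Phi '' {P | P ∈ CTSet n k ∧ numTrans P = t}
      = {M | M ∈ PMSet (n + k - 1) k ∧ numNA M = t} := by
    ext M
    simp only [Set.mem_image, Set.mem_setOf_eq]
    constructor
    · rintro ⟨P, ⟨hP, ht⟩, rfl⟩
      obtain ⟨hm, hs⟩ := S8.phi_spec hP
      exact ⟨hm, by rw [hs, ht]⟩
    · rintro ⟨hM, ht⟩
      obtain ⟨hm, hs⟩ := S8.psi_spec hM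
      exact ⟨S8.Psi M, ⟨hm, by rw [hs, ht]⟩, S8.phi_psi hM⟩
  rw [← himg, Set.ncard_image_of_injOn]
  intro P _ Q _ he
  calc P = S8.Psi (S8.Phi P) := (S8.psi_phi P).symm
    _ = S8.Psi (S8.Phi Q) := by rw [he]
    _ = Q := S8.psi_phi Q
end

section
/- As an identity of formal power series in two variables x, y: Σ_{n≥1} Σ_{k=0}^{n-1} S(n,k) x^n y^k = Σ_{n≥1} x^n (1+xy)^{n(n-1)/2} / Π_{k=0}^{n-1} (1 - (1+xy)^k x y), where S(n,k) is the number of admissible sequences of length n with n-k left-to-right maxima. -/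
/-!
In an admissible sequence the left-to-right maxima take the values `0, 1, …, n-1` in turn, and
after the maximum `k` comes a stretch of entries `≤ k` in which every entry other than `k` is
smaller than its predecessor: a decreasing run through a subset of `{0, …, k-1}`, followed by
any number of blocks "`k`, then such a run". Its length generating function is
`(1+t)^k / (1 - t(1+t)^k)` (`segmentSeries k`), so `S(n+b, b) = [t^b] ∏_{k<n} segmentSeries k`.
Substituting `t = xy`, multiplying by `x^n` and using `∑_{k<n} k = C(n,2)` gives `gfTerm n`.

The count is carried out as a transfer-matrix recursion on `TailSet m c r j`, the continuations
of length `r` of a prefix with maximum `m` and last entry `c` that contain `j` new maxima: the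
first entry is `m+1`, `m` or some `v < c`, and `stateSeries m c j` obeys the same recursion.
-/

open Finset

open MvPowerSeries in
/-- The generating-function term `x^n (1+xy)^{C(n,2)} / ∏_{k=0}^{n-1}(1-(1+xy)^k xy)`
in `ℚ[[x,y]]`, with `x = X 0`, `y = X 1`. -/
noncomputable def gfTerm (n : ℕ) : MvPowerSeries (Fin 2) ℚ :=
  (X 0 : MvPowerSeries (Fin 2) ℚ) ^ n * (1 + X 0 * X 1) ^ (n.choose 2) *
    ∏ k ∈ Finset.range n, (1 - (1 + X 0 * X 1) ^ k * X 0 * X 1)⁻¹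

theorem Finsupp.single_zero_add_single_one_inj {a b c d : ℕ} :
    (single 0 a + single 1 b : Fin 2 →₀ ℕ) = single 0 c + single 1 d ↔ a = c ∧ b = d := by
  refine ⟨fun h => ⟨?_, ?_⟩, fun ⟨hac, hbd⟩ => hac ▸ hbd ▸ rfl⟩
  · simpa using DFunLike.congr_fun h 0
  · simpa using DFunLike.congr_fun h 1

theorem PowerSeries.subst_inv {σ K : Type*} [Field K] {a : MvPowerSeries σ K}
    (ha : HasSubst a) (f : PowerSeries K) (hf : constantCoeff f ≠ 0) :
    f⁻¹.subst a = (f.subst a)⁻¹ := by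
  have h : f⁻¹.subst a * f.subst a = 1 := by
    rw [← subst_mul ha, PowerSeries.inv_mul_cancel f hf, ← map_one (substAlgHom (R := K) ha),
      coe_substAlgHom]
  refine (MvPowerSeries.eq_inv_iff_mul_eq_one ?_).2 h
  exact right_ne_zero_of_mul_eq_one (by rw [← map_mul, h, map_one])

namespace MvPowerSeries

open Finsupp

variable {R : Type*} [CommRing R]

theorem hasSubst_X_mul_X {σ : Type*} (s t : σ) :
    PowerSeries.HasSubst (X s * X t : MvPowerSeries σ R) :=
  .of_constantCoeff_zero (by simp)

theorem coeff_subst_X_mul_X (f : PowerSeries R) (a b : ℕ) :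
    coeff (single 0 a + single 1 b) (f.subst (X 0 * X 1 : MvPowerSeries (Fin 2) R)) =
      if a = b then PowerSeries.coeff b f else 0 := by
  have coeff_pow : ∀ d, coeff (single 0 a + single 1 b)
      ((X 0 * X 1 : MvPowerSeries (Fin 2) R) ^ d) = if a = d ∧ b = d then 1 else 0 := fun d => by
    rw [mul_pow, X_pow_eq, X_pow_eq, monomial_mul_monomial, one_mul, coeff_monomial]
    exact if_congr single_zero_add_single_one_inj rfl rfl
  rw [PowerSeries.coeff_subst (hasSubst_X_mul_X 0 1), finsum_eq_single _ b]
  · by_cases hab : a = b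
    · subst hab
      simp [coeff_pow]
    · simp [coeff_pow, hab]
  · intro d hd
    simp [coeff_pow, Ne.symm hd]

theorem coeff_X_zero_pow_mul (φ : MvPowerSeries (Fin 2) R) (n a b : ℕ) :
    coeff (single 0 a + single 1 b) (X 0 ^ n * φ) =
      if n ≤ a then coeff (single 0 (a - n) + single 1 b) φ else 0 := by
  have hsub : single 0 a + single 1 b - single 0 n =
      (single 0 (a - n) + single 1 b : Fin 2 →₀ ℕ) := by
    ext i
    fin_cases i <;> simp
  rw [X_pow_eq, coeff_monomial_mul, hsub, one_mul]
  exact if_congr (by simp [single_le_iff]) rfl rfl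

end MvPowerSeries

namespace LTRMax

open Finset PowerSeries

section Series

variable (K : Type*) [Field K]

noncomputable def segmentSeries (m : ℕ) : K⟦X⟧ :=
  (1 + X) ^ m * (1 - (1 + X) ^ m * X)⁻¹

noncomputable def maxSeries (m j : ℕ) : K⟦X⟧ :=
  X ^ j * ∏ i ∈ range j, segmentSeries K (m + 1 + i)

noncomputable def stateSeries (m c j : ℕ) : K⟦X⟧ :=
  (1 + X) ^ c * (1 + X * segmentSeries K m) * maxSeries K m j

variable {K}

theorem segmentSeries_eq (m : ℕ) :
    segmentSeries K m = (1 + X) ^ m * (1 + X * segmentSeries K m) := by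
  have h : (1 - (1 + X) ^ m * X : K⟦X⟧)⁻¹ * (1 - (1 + X) ^ m * X) = 1 :=
    PowerSeries.inv_mul_cancel _ (by simp)
  unfold segmentSeries
  linear_combination (1 + X) ^ m * h

theorem stateSeries_self (m j : ℕ) :
    stateSeries K m m j = segmentSeries K m * maxSeries K m j := by
  rw [stateSeries, ← segmentSeries_eq]

theorem maxSeries_succ (m j : ℕ) :
    maxSeries K m (j + 1) = X * stateSeries K (m + 1) (m + 1) j := by
  have shift : ∏ i ∈ range j, segmentSeries K (m + 1 + (i + 1)) =
      ∏ i ∈ range j, segmentSeries K (m + 1 + 1 + i) :=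
    prod_congr rfl fun i _ => by rw [add_comm i, ← add_assoc]
  rw [stateSeries_self, maxSeries, maxSeries, prod_range_succ', add_zero, shift]
  ring

theorem stateSeries_eq_maxSeries_add (m c j : ℕ) :
    stateSeries K m c j =
      maxSeries K m j + X * (stateSeries K m m j + ∑ v ∈ range c, stateSeries K m v j) := by
  have geom := geom_sum_mul_add (X : K⟦X⟧) c
  simp only [add_comm X (1 : K⟦X⟧)] at geom
  rw [stateSeries_self]
  simp only [stateSeries, ← sum_mul]
  linear_combination -(1 + X * segmentSeries K m) * maxSeries K m j * geom

theorem coeff_zero_stateSeries (m c j : ℕ) :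
    coeff 0 (stateSeries K m c j) = if j = 0 then 1 else 0 := by
  cases j <;> simp [stateSeries, maxSeries, pow_succ, ← mul_assoc]

theorem coeff_succ_stateSeries (r m c j : ℕ) :
    coeff (r + 1) (stateSeries K m c j) =
      (if j = 0 then 0 else coeff r (stateSeries K (m + 1) (m + 1) (j - 1))) +
        coeff r (stateSeries K m m j) + ∑ v ∈ range c, coeff r (stateSeries K m v j) := by
  rw [stateSeries_eq_maxSeries_add, map_add, coeff_succ_X_mul, map_add, map_sum, add_assoc]
  congr 1
  cases j with
  | zero => simp [maxSeries, coeff_one]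
  | succ j => rw [maxSeries_succ, coeff_succ_X_mul]; rfl

theorem stateSeries_zero_zero (j : ℕ) :
    stateSeries K 0 0 j = X ^ j * ∏ k ∈ range (j + 1), segmentSeries K k := by
  rw [stateSeries_self, maxSeries, prod_range_succ' _ j]
  simp only [add_comm 1]
  ring

end Series

theorem gfTerm_eq_subst (n : ℕ) :
    gfTerm n = MvPowerSeries.X 0 ^ n *
      (∏ k ∈ range n, segmentSeries ℚ k).subst (MvPowerSeries.X 0 * MvPowerSeries.X 1) := by
  set xy : MvPowerSeries (Fin 2) ℚ := MvPowerSeries.X 0 * MvPowerSeries.X 1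
  have hxy : HasSubst xy := MvPowerSeries.hasSubst_X_mul_X 0 1
  have subst_segment : ∀ k,
      (segmentSeries ℚ k).subst xy = (1 + xy) ^ k * (1 - (1 + xy) ^ k * xy)⁻¹ := by
    intro k
    rw [segmentSeries, subst_mul hxy, subst_inv hxy _ (by simp)]
    simp [← coe_substAlgHom hxy, substAlgHom_X]
  have sum_range : ∑ k ∈ range n, k = n.choose 2 := by
    rw [sum_range_id, Nat.choose_two_right]
  rw [← coe_substAlgHom hxy, map_prod, coe_substAlgHom]
  simp only [subst_segment, prod_mul_distrib, gfTerm, xy, mul_assoc]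
  rw [prod_pow_eq_pow_sum, sum_range]

theorem coeff_sum_gfTerm (a b : ℕ) :
    MvPowerSeries.coeff (Finsupp.single 0 a + Finsupp.single 1 b) (∑ n ∈ Icc 1 a, gfTerm n) =
      if b < a then coeff b (∏ k ∈ range (a - b), segmentSeries ℚ k) else 0 := by
  have term : ∀ n ∈ Icc 1 a,
      MvPowerSeries.coeff (Finsupp.single 0 a + Finsupp.single 1 b) (gfTerm n) =
        if a - b = n then coeff b (∏ k ∈ range (a - b), segmentSeries ℚ k) else 0 := by
    intro n hn
    rw [gfTerm_eq_subst, MvPowerSeries.coeff_X_zero_pow_mul, MvPowerSeries.coeff_subst_X_mul_X]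
    rw [mem_Icc] at hn
    by_cases h : a - b = n
    · subst h
      rw [if_pos (by omega), if_pos (by omega), if_pos rfl]
    · rw [if_pos hn.2, if_neg (by omega), if_neg h]
  rw [map_sum, sum_congr rfl term, Finset.sum_ite_eq]
  exact if_congr (by rw [mem_Icc]; omega) rfl rfl

section SeqCons

variable {α : Type*}

def seqCons (v : α) (w : ℕ → α) : ℕ → α
  | 0 => v
  | i + 1 => w i

theorem seqCons_zero (v : α) (w : ℕ → α) : seqCons v w 0 = v := rfl

theorem seqCons_succ (v : α) (w : ℕ → α) (i : ℕ) : seqCons v w (i + 1) = w i := rfl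

theorem seqCons_head_tail (w : ℕ → α) : seqCons (w 0) (fun i => w (i + 1)) = w := by
  funext i
  cases i <;> rfl

theorem seqCons_injective (v : α) : Function.Injective (seqCons v) :=
  fun _ _ h => funext fun i => congrFun h (i + 1)

theorem image_seqCons_preimage (v : α) (S : Set (ℕ → α)) :
    seqCons v '' (seqCons v ⁻¹' S) = {w | w 0 = v} ∩ S := by
  ext w
  constructor
  · rintro ⟨u, hu, rfl⟩
    exact ⟨rfl, hu⟩
  · rintro ⟨hw : w 0 = v, hS⟩
    subst hw
    exact ⟨fun i => w (i + 1), by rwa [Set.mem_preimage, seqCons_head_tail],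
      seqCons_head_tail w⟩

theorem finite_and_ncard_eq_sum_preimage_seqCons {S : Set (ℕ → α)} {A : Finset α}
    (hA : ∀ w ∈ S, w 0 ∈ A) (hfin : ∀ v ∈ A, (seqCons v ⁻¹' S).Finite) :
    S.Finite ∧ S.ncard = ∑ v ∈ A, (seqCons v ⁻¹' S).ncard := by
  have hS : S = ⋃ v ∈ (A : Set α), seqCons v '' (seqCons v ⁻¹' S) := by
    ext w
    simp only [image_seqCons_preimage, Set.mem_iUnion, Set.mem_inter_iff, Set.mem_ofPred_eq]
    exact ⟨fun hw => ⟨w 0, hA w hw, rfl, hw⟩, fun ⟨_, _, _, hw⟩ => hw⟩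
  have hdisj : (A : Set α).PairwiseDisjoint fun v => seqCons v '' (seqCons v ⁻¹' S) := by
    intro v _ v' _ hne
    simp only [Function.onFun, image_seqCons_preimage]
    exact Set.disjoint_left.2 fun w hv hv' => hne (hv.1.symm.trans hv'.1)
  have himage_fin : ∀ v ∈ (A : Set α), (seqCons v '' (seqCons v ⁻¹' S)).Finite :=
    fun v hv => (hfin v hv).image _
  refine ⟨hS ▸ A.finite_toSet.biUnion himage_fin, ?_⟩
  rw [congrArg Set.ncard hS, A.finite_toSet.ncard_biUnion himage_fin hdisj, finsum_mem_coe_finset]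
  exact sum_congr rfl fun v _ => Set.ncard_image_of_injective _ (seqCons_injective v)

end SeqCons

def runMax (m : ℕ) (w : ℕ → ℕ) (i : ℕ) : ℕ := m ⊔ (range i).sup w

/-- `seqCons c w i` is the entry preceding `w i`; the entries from index `r` on are padding. -/
def TailSet (m c r j : ℕ) : Set (ℕ → ℕ) :=
  {w | (∀ i, r ≤ i → w i = 0) ∧
    (∀ i < r, w i ≤ runMax m w i + 1) ∧
    (∀ i < r, w i < runMax m w i → w i < seqCons c w i) ∧
    #{i ∈ range r | runMax m w i < w i} = j}

theorem runMax_zero (m : ℕ) (w : ℕ → ℕ) : runMax m w 0 = m := by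
  simp [runMax]

theorem runMax_seqCons_succ (m v : ℕ) (w : ℕ → ℕ) (i : ℕ) :
    runMax m (seqCons v w) (i + 1) = runMax (m ⊔ v) w i := by
  simp only [runMax, range_add_one', sup_insert, sup_map, seqCons_zero, sup_assoc]
  rfl

theorem card_filter_range_succ (P : ℕ → Prop) [DecidablePred P] (r : ℕ) :
    #{i ∈ range (r + 1) | P i} = (if P 0 then 1 else 0) + #{i ∈ range r | P (i + 1)} := by
  rw [card_filter, card_filter, sum_range_succ', add_comm]

theorem forall_ge_succ_seqCons_eq_zero {v r : ℕ} {w : ℕ → ℕ} :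
    (∀ i, r + 1 ≤ i → seqCons v w i = 0) ↔ ∀ i, r ≤ i → w i = 0 :=
  ⟨fun h i hi => h (i + 1) (by omega), fun h i hi => by
    obtain ⟨i, rfl⟩ : ∃ k, i = k + 1 := ⟨i - 1, by omega⟩
    exact h i (by omega)⟩

theorem seqCons_mem_tailSet {m c r j v : ℕ} {w : ℕ → ℕ} :
    seqCons v w ∈ TailSet m c (r + 1) j ↔
      v ≤ m + 1 ∧ (v < m → v < c) ∧ (if m < v then 1 else 0) ≤ j ∧
        w ∈ TailSet (m ⊔ v) v r (j - if m < v then 1 else 0) := by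
  simp only [TailSet, Set.mem_ofPred_eq, forall_ge_succ_seqCons_eq_zero, Nat.forall_lt_succ_left',
    runMax_zero, runMax_seqCons_succ, seqCons_zero, seqCons_succ, card_filter_range_succ]
  by_cases hv : m < v <;> simp only [hv, if_true, if_false] <;> constructor
  all_goals first
    | rintro ⟨hzero, ⟨hvm, hbound⟩, ⟨hvc, hdesc⟩, hcount⟩
      exact ⟨hvm, hvc, by omega, hzero, hbound, hdesc, by omega⟩
    | rintro ⟨hvm, hvc, hj, hzero, hbound, hdesc, hcount⟩
      exact ⟨hzero, ⟨hvm, hbound⟩, ⟨hvc, hdesc⟩, by omega⟩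

theorem preimage_seqCons_tailSet_of_le {m c r j v : ℕ} (hvm : v ≤ m) (hvc : v < m → v < c) :
    seqCons v ⁻¹' TailSet m c (r + 1) j = TailSet m v r j := by
  ext w
  rw [Set.mem_preimage, seqCons_mem_tailSet, if_neg (Nat.not_lt.2 hvm), max_eq_left hvm,
    Nat.sub_zero]
  exact ⟨fun h => h.2.2.2, fun h => ⟨by omega, hvc, Nat.zero_le j, h⟩⟩

theorem preimage_seqCons_succ_tailSet (m c r j : ℕ) :
    seqCons (m + 1) ⁻¹' TailSet m c (r + 1) j =
      if j = 0 then ∅ else TailSet (m + 1) (m + 1) r (j - 1) := by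
  ext w
  split_ifs with hj <;> simp [seqCons_mem_tailSet, hj, Nat.one_le_iff_ne_zero]

theorem head_le_of_mem_tailSet {m c r j : ℕ} {w : ℕ → ℕ}
    (hw : w ∈ TailSet m c (r + 1) j) :
    w 0 ≤ m + 1 ∧ (w 0 < m → w 0 < c) := by
  rw [← seqCons_head_tail w, seqCons_mem_tailSet] at hw
  exact ⟨hw.1, hw.2.1⟩

theorem tailSet_zero (m c j : ℕ) : TailSet m c 0 j = if j = 0 then {0} else ∅ := by
  ext w
  split_ifs with hj
  · simp [TailSet, hj, funext_iff]
  · simp [TailSet, Ne.symm hj]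

theorem finite_tailSet_and_ncard_eq_coeff (K : Type*) [Field K] (r : ℕ) :
    ∀ m c j, c ≤ m → (TailSet m c r j).Finite ∧
      ((TailSet m c r j).ncard : K) = coeff r (stateSeries K m c j) := by
  induction r with
  | zero =>
    intro m c j _
    rw [tailSet_zero, coeff_zero_stateSeries]
    split_ifs <;> simp
  | succ r ih =>
    intro m c j hc
    set A := insert (m + 1) (insert m (range c))
    have hA : ∀ w ∈ TailSet m c (r + 1) j, w 0 ∈ A := fun w hw => by
      have := head_le_of_mem_tailSet hw
      simp only [A, mem_insert, mem_range]
      omega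
    have preimage_eq : ∀ v ∈ insert m (range c),
        seqCons v ⁻¹' TailSet m c (r + 1) j = TailSet m v r j := fun v hv => by
      rw [mem_insert, mem_range] at hv
      exact preimage_seqCons_tailSet_of_le (by omega) (by omega)
    have hfin : ∀ v ∈ A, (seqCons v ⁻¹' TailSet m c (r + 1) j).Finite := by
      intro v hv
      rcases mem_insert.1 hv with rfl | hv
      · rw [preimage_seqCons_succ_tailSet]
        split_ifs
        exacts [Set.finite_empty, (ih _ _ _ le_rfl).1]
      · rw [preimage_eq v hv]
        exact (ih _ _ _ (by simp only [mem_insert, mem_range] at hv; omega)).1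
    obtain ⟨hfinite, hcard⟩ := finite_and_ncard_eq_sum_preimage_seqCons hA hfin
    refine ⟨hfinite, ?_⟩
    rw [hcard, sum_insert (by simp; omega), sum_insert (by simp; omega),
      preimage_seqCons_succ_tailSet, preimage_eq m (mem_insert_self _ _),
      sum_congr rfl fun v hv => by rw [preimage_eq v (mem_insert_of_mem hv)],
      coeff_succ_stateSeries]
    push_cast
    rw [(ih m m j le_rfl).2, sum_congr rfl fun v hv => (ih m v j (by simp at hv; omega)).2]
    split_ifs
    · simp
    · rw [(ih _ _ _ le_rfl).2, add_assoc]

theorem runMax_zero_left : runMax 0 = lmax := by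
  funext w i
  simp [runMax, lmax]

theorem seqSet_succ {r b : ℕ} (hb : b ≤ r) :
    SeqSet (r + 1) b = {x | x 0 = 0} ∩ TailSet 0 0 (r + 1) (r - b) := by
  ext x
  have lmax_zero : lmax x 0 = 0 := by simp [lmax]
  have shift : ∀ P : ℕ → Prop,
      (∀ i, 1 ≤ i → i < r + 1 → P i) ↔ ∀ i < r, P (i + 1) := fun P => ⟨fun h i hi => h (i + 1) (by omega) (by omega), fun h i h1 h2 => by
      obtain ⟨i, rfl⟩ : ∃ k, i = k + 1 := ⟨i - 1, by omega⟩
      exact h i (by omega)⟩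
  simp only [SeqSet, TailSet, Set.mem_inter_iff, Set.mem_ofPred_eq, runMax_zero_left,
    Nat.forall_lt_succ_left', shift, card_filter_range_succ, seqCons_succ, Nat.add_sub_cancel,
    lmax_zero, true_or, if_true, Nat.add_one_ne_zero, false_or]
  constructor
  · rintro ⟨hzero, h0, hbound, hdesc, hcount⟩
    refine ⟨h0, hzero, ⟨by omega, hbound⟩, ⟨by omega, hdesc⟩, ?_⟩
    simp only [h0, lt_irrefl, if_false]
    omega
  · rintro ⟨h0, hzero, ⟨-, hbound⟩, ⟨-, hdesc⟩, hcount⟩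
    simp only [h0, lt_irrefl, if_false] at hcount
    exact ⟨hzero, h0, hbound, hdesc, by omega⟩

theorem seqSet_eq_empty {a b : ℕ} (ha : 1 ≤ a) (hab : a ≤ b) : SeqSet a b = ∅ := by
  refine Set.eq_empty_of_forall_notMem fun x hx => ?_
  have hcount := hx.2.2.2.2
  have : 0 < #{i ∈ range a | i = 0 ∨ lmax x i < x i} :=
    card_pos.2 ⟨0, mem_filter.2 ⟨mem_range.2 ha, Or.inl rfl⟩⟩
  omega

theorem cast_ncard_seqSet (K : Type*) [Field K] {a : ℕ} (b : ℕ) (ha : 1 ≤ a) :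
    ((SeqSet a b).ncard : K) =
      if b < a then coeff b (∏ k ∈ range (a - b), segmentSeries K k) else 0 := by
  split_ifs with hba
  · obtain ⟨j, rfl⟩ : ∃ j, a = b + j + 1 := ⟨a - b - 1, by omega⟩
    rw [seqSet_succ (Nat.le_add_right b j), ← image_seqCons_preimage,
      preimage_seqCons_tailSet_of_le le_rfl (by omega),
      Set.ncard_image_of_injective _ (seqCons_injective 0), Nat.add_sub_cancel_left,
      (finite_tailSet_and_ncard_eq_coeff K _ 0 0 j le_rfl).2, stateSeries_zero_zero,
      coeff_X_pow_mul, add_assoc, Nat.add_sub_cancel_left]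
  · rw [seqSet_eq_empty ha (by omega), Set.ncard_empty, Nat.cast_zero]

end LTRMax

/-- `Σ_{n≥1} Σ_k S(n,k) x^n y^k = Σ_{n≥1} x^n (1+xy)^{C(n,2)} / ∏_{k=0}^{n-1}(1-(1+xy)^k xy)`,
stated coefficient-wise: the coefficient of `x^a y^b` on the left is `S(a,b)`, and on the
right only the terms with `n ≤ a` contribute (each `gfTerm n` is divisible by `x^n`). -/
theorem stmt11 (a b : ℕ) (ha : 1 ≤ a) :
    ((SeqSet a b).ncard : ℚ) =
      MvPowerSeries.coeff (R := ℚ) (Finsupp.single 0 a + Finsupp.single 1 b)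
        (∑ n ∈ Finset.Icc 1 a, gfTerm n) := by
  rw [LTRMax.cast_ncard_seqSet ℚ b ha, LTRMax.coeff_sum_gfTerm]
end

section
/- The map that sends a partition P of [n] avoiding right crossings with k arcs to a partial matching by (1) inserting a new vertex immediately after every closer except the last closer, (2) replacing every 2-path, i.e., pair of arcs (i,j),(j,k), by the neighbor alignment (i,j),(j+1,k) using the inserted vertex, and (3) relabeling vertices in order, produces a partial matching of [n+k-1] with k arcs avoiding 2-right crossings and right nestings. -/
open Finset

/-- The right endpoints of the arcs of a diagram. -/
def rightEnds (P : Finset (ℕ × ℕ)) : Finset ℕ := P.image Prod.snd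

/-- The new label of vertex `v` after inserting one new vertex immediately after
every right endpoint except the last (largest) one. -/
def shiftMap (P : Finset (ℕ × ℕ)) (v : ℕ) : ℕ :=
  v + (((rightEnds P).erase ((rightEnds P).sup id)).filter (fun r => r < v)).card

/-- The map from partitions to partial matchings: insert a new vertex immediately
after every right endpoint except the last, and replace every 2-path `(i,j),(j,k)`
by the neighbor alignment `(i,j),(j+1,k)`, i.e. move the opener of any arc whose
opener is a right endpoint to the inserted vertex just after it. -/
def toMatching (P : Finset (ℕ × ℕ)) : Finset (ℕ × ℕ) :=
  P.image (fun p =>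
    (shiftMap P p.1 + (if p.1 ∈ rightEnds P then 1 else 0), shiftMap P p.2))

/-- Number of inserted vertices before `v`. -/
def ecut (P : Finset (ℕ × ℕ)) (v : ℕ) : ℕ :=
  (((rightEnds P).erase ((rightEnds P).sup id)).filter (fun r => r < v)).card

lemma shiftMap_def (P : Finset (ℕ × ℕ)) (v : ℕ) : shiftMap P v = v + ecut P v := rfl

lemma ecut_mono (P : Finset (ℕ × ℕ)) {v w : ℕ} (h : v ≤ w) : ecut P v ≤ ecut P w := by
  apply Finset.card_le_card
  intro x hx
  have hx' := Finset.mem_filter.1 hx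
  exact Finset.mem_filter.2 ⟨hx'.1, lt_of_lt_of_le hx'.2 h⟩

lemma shiftMap_mono (P : Finset (ℕ × ℕ)) {v w : ℕ} (h : v ≤ w) :
    shiftMap P v ≤ shiftMap P w := by
  have := ecut_mono P h
  rw [shiftMap_def, shiftMap_def]
  omega

lemma shiftMap_strict (P : Finset (ℕ × ℕ)) {v w : ℕ} (h : v < w) :
    shiftMap P v < shiftMap P w := by
  have := ecut_mono P h.le
  rw [shiftMap_def, shiftMap_def]
  omega

lemma ecut_add_one_le (P : Finset (ℕ × ℕ)) {v w : ℕ}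
    (hv : v ∈ (rightEnds P).erase ((rightEnds P).sup id)) (h : v < w) :
    ecut P v + 1 ≤ ecut P w := by
  have hsub : insert v ((((rightEnds P).erase ((rightEnds P).sup id)).filter (fun r => r < v))) ⊆
      (((rightEnds P).erase ((rightEnds P).sup id)).filter (fun r => r < w)) := by
    intro x hx
    rcases Finset.mem_insert.1 hx with rfl | hx
    · exact Finset.mem_filter.2 ⟨hv, h⟩
    · have hx' := Finset.mem_filter.1 hx
      exact Finset.mem_filter.2 ⟨hx'.1, lt_trans hx'.2 h⟩
  have hnot : v ∉ (((rightEnds P).erase ((rightEnds P).sup id)).filter (fun r => r < v)) := by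
    simp
  have hle := Finset.card_le_card hsub
  rw [Finset.card_insert_of_notMem hnot] at hle
  unfold ecut
  omega

/-- Key jump lemma: passing an inserted vertex increases the gap. -/
lemma shiftMap_jump (P : Finset (ℕ × ℕ)) {v w : ℕ}
    (hv : v ∈ (rightEnds P).erase ((rightEnds P).sup id)) (h : v < w) :
    shiftMap P v + (w - v) + 1 ≤ shiftMap P w := by
  have := ecut_add_one_le P hv h
  rw [shiftMap_def, shiftMap_def]
  omega

lemma shiftMap_inj (P : Finset (ℕ × ℕ)) {v w : ℕ} (h : shiftMap P v = shiftMap P w) :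
    v = w := by
  rcases lt_trichotomy v w with h' | h' | h'
  · exact absurd h (shiftMap_strict P h').ne
  · exact h'
  · exact absurd h.symm (shiftMap_strict P h').ne

/-- The map sending a partition of `[n]` with `k` arcs avoiding right crossings to
the described relabelled diagram produces a partial matching of `[n+k-1]` with `k`
arcs avoiding 2-right crossings and right nestings. -/
theorem stmt16 (n k : ℕ) (hn : 1 ≤ n) (hk : k ≤ n - 1)
    (P : Finset (ℕ × ℕ)) (hP : P ∈ CTSet n k) :
    toMatching P ∈ PMSet (n + k - 1) k := by
  obtain ⟨⟨hbd, hdisj⟩, hcard, hcross⟩ := hP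
  -- basic facts
  have hsndinj : ∀ p ∈ P, ∀ q ∈ P, p.2 = q.2 → p = q := by
    intro p hp q hq h
    by_contra hne
    exact (hdisj p hp q hq hne).2 h
  have hRk : (rightEnds P).card = k := by
    rw [← hcard]
    exact Finset.card_image_of_injOn (fun p hp q hq h => hsndinj p hp q hq h)
  have hsnd : ∀ p ∈ P, p.2 ∈ rightEnds P := fun p hp => Finset.mem_image_of_mem Prod.snd hp
  have hmemE : ∀ v w : ℕ, v ∈ rightEnds P → w ∈ rightEnds P → v < w →
      v ∈ (rightEnds P).erase ((rightEnds P).sup id) := by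
    intro v w hv hw hvw
    refine Finset.mem_erase.2 ⟨?_, hv⟩
    have hws : id w ≤ (rightEnds P).sup id := Finset.le_sup hw
    simp only [id] at hws
    omega
  have hfstE : ∀ p ∈ P, p.1 ∈ rightEnds P →
      p.1 ∈ (rightEnds P).erase ((rightEnds P).sup id) := by
    intro p hp h1
    exact hmemE _ _ h1 (hsnd p hp) (hbd p hp).2.1
  -- bound on shiftMap of right endpoints
  have hbound : ∀ p ∈ P, shiftMap P p.2 ≤ n + k - 1 := by
    intro p hp
    have hk1 : 1 ≤ k := by
      rw [← hcard]
      exact Finset.card_pos.2 ⟨p, hp⟩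
    obtain ⟨b, hb, hbeq⟩ :=
      Finset.exists_mem_eq_sup (rightEnds P) ⟨p.2, hsnd p hp⟩ id
    have hEcard : ((rightEnds P).erase ((rightEnds P).sup id)).card = k - 1 := by
      rw [hbeq]
      simp only [id_eq]
      rw [Finset.card_erase_of_mem hb, hRk]
    have hle : ecut P p.2 ≤ k - 1 := by
      rw [← hEcard]
      exact Finset.card_le_card (Finset.filter_subset _ _)
    have := (hbd p hp).2.2
    rw [shiftMap_def]
    omega
  -- new left endpoint comparisons
  have hLL : ∀ p ∈ P, ∀ q ∈ P, p.1 < q.1 →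
      shiftMap P p.1 + (if p.1 ∈ rightEnds P then 1 else 0) <
      shiftMap P q.1 + (if q.1 ∈ rightEnds P then 1 else 0) := by
    intro p hp q hq h
    by_cases h1 : p.1 ∈ rightEnds P
    · have hE := hfstE p hp h1
      have hj := shiftMap_jump P hE h
      simp only [h1, if_true]
      have : q.1 - p.1 ≥ 1 := by omega
      split_ifs <;> omega
    · have := shiftMap_strict P h
      simp only [h1, if_false]
      split_ifs <;> omega
  have hLR : ∀ p ∈ P, ∀ q ∈ P,
      shiftMap P p.1 + (if p.1 ∈ rightEnds P then 1 else 0) ≠ shiftMap P q.2 := by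
    intro p hp q hq
    by_cases h1 : p.1 ∈ rightEnds P
    · have hE := hfstE p hp h1
      simp only [h1, if_true]
      rcases lt_trichotomy p.1 q.2 with h' | h' | h'
      · have hj := shiftMap_jump P hE h'
        have : q.2 - p.1 ≥ 1 := by omega
        omega
      · rw [h']
        omega
      · have := shiftMap_strict P h'
        omega
    · simp only [h1, if_false]
      intro h
      have := shiftMap_inj P h
      exact h1 (this ▸ hsnd q hq)
  refine ⟨⟨?_, ?_⟩, ?_, ?_, ?_⟩
  · -- bounds
    intro p' hp'
    obtain ⟨p, hp, rfl⟩ := Finset.mem_image.1 hp'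
    obtain ⟨h1, h2, h3⟩ := hbd p hp
    refine ⟨?_, ?_, ?_⟩
    · simp only
      rw [shiftMap_def]
      omega
    · simp only
      by_cases hm : p.1 ∈ rightEnds P
      · have hE := hfstE p hp hm
        have hj := shiftMap_jump P hE h2
        simp only [hm, if_true]
        omega
      · have := shiftMap_strict P h2
        simp only [hm, if_false]
        omega
    · exact hbound p hp
  · -- disjointness
    intro p' hp' q' hq' hne
    obtain ⟨p, hp, rfl⟩ := Finset.mem_image.1 hp'
    obtain ⟨q, hq, rfl⟩ := Finset.mem_image.1 hq'
    have hpq : p ≠ q := by rintro rfl; exact hne rfl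
    obtain ⟨h1, h2⟩ := hdisj p hp q hq hpq
    refine ⟨?_, ?_, ?_, ?_⟩
    · simp only
      rcases lt_or_gt_of_ne h1 with h | h
      · exact (hLL p hp q hq h).ne
      · exact (hLL q hq p hp h).ne'
    · exact hLR p hp q hq
    · exact (hLR q hq p hp).symm
    · simp only
      intro h
      exact h2 (shiftMap_inj P h)
  · -- cardinality
    rw [← hcard]
    apply Finset.card_image_of_injOn
    intro p hp q hq h
    have h2 : shiftMap P p.2 = shiftMap P q.2 := congrArg Prod.snd h
    exact hsndinj p hp q hq (shiftMap_inj P h2)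
  · -- no 2-right crossing
    rintro ⟨p', hp', q', hq', h1, h2, h3, h4⟩
    obtain ⟨p, hp, rfl⟩ := Finset.mem_image.1 hp'
    obtain ⟨q, hq, rfl⟩ := Finset.mem_image.1 hq'
    simp only at h1 h2 h3 h4
    have hq2 : p.2 < q.2 := by
      by_contra hle
      exact absurd h3 (not_lt.2 (shiftMap_mono P (not_lt.1 hle)))
    have hE : p.2 ∈ (rightEnds P).erase ((rightEnds P).sup id) :=
      hmemE _ _ (hsnd p hp) (hsnd q hq) hq2
    have hq1 : q.1 < p.2 := by
      by_contra hle
      have := shiftMap_mono P (not_lt.1 hle)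
      omega
    have hpq : p ≠ q := by
      rintro rfl
      omega
    have hp1 : p.1 < q.1 := by
      rcases lt_or_gt_of_ne (hdisj p hp q hq hpq).1 with h | h
      · exact h
      · exact absurd h1 (not_lt.2 (hLL q hq p hp h).le)
    have hne1 : q.2 ≠ p.2 + 1 := by
      intro h
      exact hcross ⟨p, hp, q, hq, hp1, hq1, hq2, h⟩
    have hj := shiftMap_jump P hE hq2
    have : q.2 - p.2 ≥ 2 := by omega
    omega
  · -- no right nesting
    rintro ⟨p', hp', q', hq', h1, h2, h3, h4⟩
    obtain ⟨p, hp, rfl⟩ := Finset.mem_image.1 hp'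
    obtain ⟨q, hq, rfl⟩ := Finset.mem_image.1 hq'
    simp only at h1 h2 h3 h4
    have hq2 : q.2 < p.2 := by
      by_contra hle
      exact absurd h3 (not_lt.2 (shiftMap_mono P (not_lt.1 hle)))
    have hE : q.2 ∈ (rightEnds P).erase ((rightEnds P).sup id) :=
      hmemE _ _ (hsnd q hq) (hsnd p hp) hq2
    have hj := shiftMap_jump P hE hq2
    have : p.2 - q.2 ≥ 1 := by omega
    omega
end
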